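/- arXiv:2103.02543 — 8 statements merged into one kernel-verified Lean document; each statement's English description precedes it below -/
import Mathlib

section
/- Every function φ₀ ∈ Φ is continuous as a map from X to ℝ when X is equipped with the topology induced by the pseudo-distance Δ_X. -/
open MeasureTheory Filter Topology RealInnerProductSpace

noncomputable section

/-- The topology on a set induced by a pseudo-distance `d`, generated by the open balls. -/
def distTopology {X : Type*} (d : X → X → ℝ) : TopologicalSpace X :=
  TopologicalSpace.generateFrom {s : Set X | ∃ x r, s = {y | d x y < r}}

theorem statement1
    {X : Type*} {V : Type*} [NormedAddCommGroup V] [InnerProductSpace ℝ V]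
    [FiniteDimensional ℝ V] [MeasurableSpace V] [BorelSpace V]
    (ev : V →ₗ[ℝ] (X → ℝ)) (hev : Function.Injective ev)
    (hbdd : ∀ φ : V, BddAbove (Set.range fun x => |ev φ x|))
    (α β : ℝ) (hα : 0 < α) (hβ : 0 < β)
    (hnorm₁ : ∀ φ : V, α * (⨆ x, |ev φ x|) ≤ ‖φ‖)
    (hnorm₂ : ∀ φ : V, ‖φ‖ ≤ β * (⨆ x, |ev φ x|))
    (Φ : Set V)
    (lam : Measure V) (f : V → ℝ) (hf0 : ∀ φ, 0 ≤ f φ)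
    (hfint : Integrable f lam) (hf1 : ∫ φ, f φ ∂lam = 1)
    (hΦsupp : Φ = {φ : V | ∀ U : Set V, IsOpen U → φ ∈ U →
      0 < (lam.withDensity fun ψ => ENNReal.ofReal (f ψ)) U})
    (hΦc : IsCompact Φ)
    (ΔX DX : X → X → ℝ)
    (hΔX : ∀ x₁ x₂, ΔX x₁ x₂ = ∫ φ in Φ, |ev φ x₁ - ev φ x₂| * f φ ∂lam)
    (hDX : ∀ x₁ x₂, DX x₁ x₂ = ⨆ φ : Φ, |ev (φ : V) x₁ - ev (φ : V) x₂|)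
    (φ₀ : V) (hφ₀ : φ₀ ∈ Φ) :
    @Continuous X ℝ (distTopology ΔX) _ (ev φ₀) := by
  letI : TopologicalSpace X := distTopology ΔX
  set μ := lam.withDensity fun ψ => ENNReal.ofReal (f ψ) with hμ
  -- sup-norm bound
  have hsup : ∀ (ψ : V) (x : X), |ev ψ x| ≤ ‖ψ‖ / α := by
    intro ψ x
    rw [le_div_iff₀ hα, mul_comm]
    calc α * |ev ψ x| ≤ α * ⨆ x, |ev ψ x| := by
          gcongr; exact le_ciSup (hbdd ψ) x
      _ ≤ ‖ψ‖ := hnorm₁ ψ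
  have hΦmeas : MeasurableSet Φ := hΦc.isClosed.measurableSet
  -- complement of support is null
  have hΦcnull : μ Φᶜ = 0 := by
    refine measure_null_of_locally_null _ fun ψ hψ => ?_
    rw [hΦsupp] at hψ
    simp only [Set.mem_compl_iff, Set.mem_setOf_eq, not_forall] at hψ
    obtain ⟨U, hUopen, hψU, hU0⟩ := hψ
    exact ⟨U, mem_nhdsWithin_of_mem_nhds (hUopen.mem_nhds hψU),
      by simpa using (not_lt.1 hU0)⟩
  have hμuniv : μ Set.univ = 1 := by
    rw [hμ, withDensity_apply _ MeasurableSet.univ, setLIntegral_univ,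
      ← ofReal_integral_eq_lintegral_ofReal hfint (Filter.Eventually.of_forall hf0),
      hf1, ENNReal.ofReal_one]
  have key : ∀ ε : ℝ, 0 < ε → ∃ r : ℝ, 0 < r ∧
      ∀ x y : X, ΔX x y < r → |ev φ₀ x - ev φ₀ y| < ε := by
    intro ε hε
    set s := α * ε / 4 with hs
    have hs0 : 0 < s := by positivity
    set B := Metric.ball φ₀ s with hB
    have hμB : 0 < μ B := by
      have h := hΦsupp ▸ hφ₀
      exact h B Metric.isOpen_ball (Metric.mem_ball_self hs0)
    have hμBne : μ B ≠ ⊤ := by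
      refine ne_top_of_le_ne_top ?_ (measure_mono (Set.subset_univ B))
      rw [hμuniv]; exact ENNReal.one_ne_top
    set c := (μ B).toReal with hc
    have hc0 : 0 < c := ENNReal.toReal_pos hμB.ne' hμBne
    refine ⟨c * (ε / 2), by positivity, ?_⟩
    intro x y hxy
    by_contra hcon
    push_neg at hcon
    -- pointwise bound on B
    have hpt : ∀ φ ∈ B, ε / 2 ≤ |ev φ x - ev φ y| := by
      intro φ hφ
      have hφd : ‖φ₀ - φ‖ < s := by
        rw [norm_sub_rev, ← dist_eq_norm]
        exact Metric.mem_ball.1 hφ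
      have h1 : |ev φ₀ x - ev φ₀ y| - |ev φ x - ev φ y| ≤
          |ev (φ₀ - φ) x| + |ev (φ₀ - φ) y| := by
        have := abs_sub ((ev φ₀ x - ev φ₀ y)) ((ev φ x - ev φ y))
        have h2 : (ev φ₀ x - ev φ₀ y) - (ev φ x - ev φ y)
            = ev (φ₀ - φ) x - ev (φ₀ - φ) y := by
          simp [map_sub]; ring
        calc |ev φ₀ x - ev φ₀ y| - |ev φ x - ev φ y|
            ≤ |(ev φ₀ x - ev φ₀ y) - (ev φ x - ev φ y)| := abs_sub_abs_le_abs_sub _ _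
          _ = |ev (φ₀ - φ) x - ev (φ₀ - φ) y| := by rw [h2]
          _ ≤ |ev (φ₀ - φ) x| + |ev (φ₀ - φ) y| := abs_sub _ _
      have h3 : |ev (φ₀ - φ) x| ≤ s / α := le_trans (hsup _ x) (by gcongr)
      have h4 : |ev (φ₀ - φ) y| ≤ s / α := le_trans (hsup _ y) (by gcongr)
      have hsα : s / α = ε / 4 := by
        field_simp [hs]; ring
      nlinarith [hcon, abs_nonneg (ev φ x - ev φ y)]
    have hBΦmeas : MeasurableSet (B ∩ Φ) := Metric.isOpen_ball.measurableSet.inter hΦmeas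
    have hcontg : Continuous fun φ : V => |ev φ x - ev φ y| := by
      have hx' : Continuous fun φ : V => ev φ x :=
        LinearMap.continuous_of_finiteDimensional ((LinearMap.proj x).comp ev)
      have hy' : Continuous fun φ : V => ev φ y :=
        LinearMap.continuous_of_finiteDimensional ((LinearMap.proj y).comp ev)
      exact (hx'.sub hy').abs
    obtain ⟨C, hC⟩ := hΦc.exists_bound_of_continuousOn hcontg.continuousOn
    have hfiΦ : IntegrableOn f Φ lam := hfint.integrableOn
    have hint : IntegrableOn (fun φ => |ev φ x - ev φ y| * f φ) Φ lam := by
      refine Integrable.mono' (hfiΦ.const_mul C)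
        (hcontg.aestronglyMeasurable.mul hfint.1.restrict) ?_
      rw [ae_restrict_iff' hΦmeas]
      refine ae_of_all _ fun φ hφ => ?_
      rw [Real.norm_eq_abs, abs_mul, abs_abs, abs_of_nonneg (hf0 φ)]
      exact mul_le_mul_of_nonneg_right (by simpa using hC φ hφ) (hf0 φ)
    have hintBΦ : IntegrableOn (fun φ => |ev φ x - ev φ y| * f φ) (B ∩ Φ) lam :=
      hint.mono_set Set.inter_subset_right
    have hfBΦ : IntegrableOn f (B ∩ Φ) lam := hfiΦ.mono_set Set.inter_subset_right
    have h1 : ∫ φ in B ∩ Φ, ε / 2 * f φ ∂lam ≤ ∫ φ in B ∩ Φ, |ev φ x - ev φ y| * f φ ∂lam :=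
      setIntegral_mono_on (hfBΦ.const_mul _) hintBΦ hBΦmeas
        (fun φ hφ => mul_le_mul_of_nonneg_right (hpt φ hφ.1) (hf0 φ))
    have h2 : ∫ φ in B ∩ Φ, |ev φ x - ev φ y| * f φ ∂lam ≤
        ∫ φ in Φ, |ev φ x - ev φ y| * f φ ∂lam :=
      setIntegral_mono_set hint (ae_of_all _ fun φ => mul_nonneg (abs_nonneg _) (hf0 φ))
        (HasSubset.Subset.eventuallyLE Set.inter_subset_right)
    have hval : ∫ φ in B ∩ Φ, f φ ∂lam = c := by
      have h2' : ENNReal.ofReal (∫ φ in B ∩ Φ, f φ ∂lam) = μ B := by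
        rw [ofReal_integral_eq_lintegral_ofReal hfBΦ (ae_of_all _ hf0), hμ,
          ← withDensity_apply _ hBΦmeas, ← hμ, measure_inter_conull hΦcnull]
      have hnn : 0 ≤ ∫ φ in B ∩ Φ, f φ ∂lam := integral_nonneg fun _ => hf0 _
      rw [hc, ← h2', ENNReal.toReal_ofReal hnn]
    have hfinal : c * (ε / 2) ≤ ΔX x y := by
      rw [hΔX]
      calc c * (ε / 2) = ε / 2 * ∫ φ in B ∩ Φ, f φ ∂lam := by rw [hval]; ring
        _ = ∫ φ in B ∩ Φ, ε / 2 * f φ ∂lam := (integral_const_mul _ _).symm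
        _ ≤ _ := h1.trans h2
    linarith
  -- topology part
  have hΔ0 : ∀ x : X, ΔX x x = 0 := by
    intro x; rw [hΔX]; simp
  have hopen : ∀ S : Set X, (∀ x ∈ S, ∃ r, 0 < r ∧ {y | ΔX x y < r} ⊆ S) → IsOpen S := by
    intro S hS
    choose r hr hsub using hS
    have hSeq : S = ⋃ x : S, {y | ΔX (x : X) y < r x x.2} := by
      ext y; constructor
      · intro hy
        exact Set.mem_iUnion.2 ⟨⟨y, hy⟩, by simp [hΔ0 y, hr y hy]⟩
      · intro hy
        obtain ⟨x, hx⟩ := Set.mem_iUnion.1 hy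
        exact hsub _ _ hx
    rw [hSeq]
    exact isOpen_iUnion fun x =>
      TopologicalSpace.isOpen_generateFrom_of_mem ⟨(x : X), r x x.2, rfl⟩
  rw [continuous_def]
  intro U hU
  apply hopen
  intro x hx
  obtain ⟨ε, hε, hball⟩ := Metric.isOpen_iff.1 hU _ hx
  obtain ⟨r, hr, hkey⟩ := key ε hε
  refine ⟨r, hr, fun y hy => ?_⟩
  apply hball
  rw [Metric.mem_ball, Real.dist_eq, abs_sub_comm]
  exact hkey x y hy
end
end

section
/- The topology on X induced by the pseudo-distance Δ_X, the topology induced by the pseudo-distance D_X, and the initial topology on X with respect to the family of functions Φ (i.e., the coarsest topology making every φ ∈ Φ continuous) all coincide. -/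
open MeasureTheory Filter Topology RealInnerProductSpace

noncomputable section

lemma distTopology_isOpen {X : Type*} {d : X → X → ℝ} {s : Set X}
    (h : ∀ y ∈ s, ∃ x r, d x y < r ∧ ∀ z, d x z < r → z ∈ s) :
    IsOpen[distTopology d] s := by
  letI := distTopology d
  rw [isOpen_iff_forall_mem_open]
  intro y hy
  obtain ⟨x, r, hxy, hsub⟩ := h y hy
  exact ⟨{z | d x z < r}, fun z hz => hsub z hz,
    TopologicalSpace.isOpen_generateFrom_of_mem ⟨x, r, rfl⟩, hxy⟩

theorem statement3
    {X : Type*} {V : Type*} [NormedAddCommGroup V] [InnerProductSpace ℝ V]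
    [FiniteDimensional ℝ V] [MeasurableSpace V] [BorelSpace V]
    (ev : V →ₗ[ℝ] (X → ℝ)) (hev : Function.Injective ev)
    (hbdd : ∀ φ : V, BddAbove (Set.range fun x => |ev φ x|))
    (α β : ℝ) (hα : 0 < α) (hβ : 0 < β)
    (hnorm₁ : ∀ φ : V, α * (⨆ x, |ev φ x|) ≤ ‖φ‖)
    (hnorm₂ : ∀ φ : V, ‖φ‖ ≤ β * (⨆ x, |ev φ x|))
    (Φ : Set V)
    (lam : Measure V) (f : V → ℝ) (hf0 : ∀ φ, 0 ≤ f φ)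
    (hfint : Integrable f lam) (hf1 : ∫ φ, f φ ∂lam = 1)
    (hΦsupp : Φ = {φ : V | ∀ U : Set V, IsOpen U → φ ∈ U →
      0 < (lam.withDensity fun ψ => ENNReal.ofReal (f ψ)) U})
    (hΦc : IsCompact Φ)
    (ΔX DX : X → X → ℝ)
    (hΔX : ∀ x₁ x₂, ΔX x₁ x₂ = ∫ φ in Φ, |ev φ x₁ - ev φ x₂| * f φ ∂lam)
    (hDX : ∀ x₁ x₂, DX x₁ x₂ = ⨆ φ : Φ, |ev (φ : V) x₁ - ev (φ : V) x₂|)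
    :
    distTopology ΔX = distTopology DX ∧
    distTopology DX =
      ⨅ φ : Φ, TopologicalSpace.induced (fun x => ev (φ : V) x)
        (inferInstance : TopologicalSpace ℝ) := by
  -- notation
  set μ := lam.withDensity fun ψ => ENNReal.ofReal (f ψ) with hμdef
  have hΦmeas : MeasurableSet Φ := hΦc.isClosed.measurableSet
  -- measure of sets via integrals
  have hμs : ∀ s : Set V, MeasurableSet s → μ s = ENNReal.ofReal (∫ φ in s, f φ ∂lam) := by
    intro s hs
    rw [hμdef, withDensity_apply _ hs,
      ← ofReal_integral_eq_lintegral_ofReal hfint.integrableOn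
        (ae_restrict_of_ae (ae_of_all _ hf0))]
  have hμuniv : μ Set.univ = 1 := by
    rw [hμs Set.univ MeasurableSet.univ, setIntegral_univ, hf1, ENNReal.ofReal_one]
  have hμfin : ∀ s : Set V, μ s < ⊤ := fun s =>
    lt_of_le_of_lt (measure_mono (Set.subset_univ s)) (hμuniv ▸ ENNReal.one_lt_top)
  -- complement of support is null
  have hcompl : μ Φᶜ = 0 := by
    have hsub : Φᶜ ⊆ ⋃₀ {U : Set V | IsOpen U ∧ μ U = 0} := by
      intro φ hφ
      rw [hΦsupp] at hφ
      simp only [Set.mem_compl_iff, Set.mem_setOf_eq, not_forall] at hφ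
      obtain ⟨U, hUo, hφU, hU0⟩ := hφ
      exact ⟨U, ⟨hUo, by simpa [pos_iff_ne_zero] using hU0⟩, hφU⟩
    obtain ⟨T, hTc, hTsub, hTU⟩ :=
      TopologicalSpace.isOpen_sUnion_countable {U : Set V | IsOpen U ∧ μ U = 0}
        (fun U hU => hU.1)
    refine measure_mono_null hsub ?_
    rw [← hTU]
    exact (measure_sUnion_null_iff hTc).2 fun s hs => (hTsub hs).2
  -- Φ is nonempty
  have hΦne : Φ.Nonempty := by
    rcases Set.eq_empty_or_nonempty Φ with h | h
    · exfalso
      have : μ Set.univ = 0 := by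
        have : (Φᶜ : Set V) = Set.univ := by simp [h]
        rw [← this]; exact hcompl
      rw [hμuniv] at this; exact one_ne_zero this
    · exact h
  haveI : Nonempty Φ := hΦne.to_subtype
  -- evaluation maps are continuous
  have contev : ∀ x : X, Continuous fun φ : V => ev φ x := by
    intro x
    exact LinearMap.continuous_of_finiteDimensional ((LinearMap.proj x).comp ev)
  -- pointwise bound by the norm
  have habs : ∀ (φ : V) (x : X), |ev φ x| ≤ ‖φ‖ / α := by
    intro φ x
    have h1 : |ev φ x| ≤ ⨆ x, |ev φ x| := le_ciSup (hbdd φ) x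
    have h2 := hnorm₁ φ
    rw [le_div_iff₀ hα]
    nlinarith
  -- Lipschitz dependence on φ
  have hlip : ∀ (x y : X) (φ ψ : V),
      abs (|ev φ x - ev φ y| - |ev ψ x - ev ψ y|) ≤ 2 / α * ‖φ - ψ‖ := by
    intro x y φ ψ
    have h1 := habs (φ - ψ) x
    have h2 := habs (φ - ψ) y
    simp only [map_sub, Pi.sub_apply] at h1 h2
    calc abs (|ev φ x - ev φ y| - |ev ψ x - ev ψ y|)
        ≤ |(ev φ x - ev φ y) - (ev ψ x - ev ψ y)| := abs_abs_sub_abs_le_abs_sub _ _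
      _ = |(ev φ x - ev ψ x) - (ev φ y - ev ψ y)| := by congr 1; ring
      _ ≤ |ev φ x - ev ψ x| + |ev φ y - ev ψ y| := abs_sub _ _
      _ ≤ ‖φ - ψ‖ / α + ‖φ - ψ‖ / α := add_le_add h1 h2
      _ = 2 / α * ‖φ - ψ‖ := by ring
  -- uniform bound on Φ
  obtain ⟨R, hR⟩ := hΦc.isBounded.exists_norm_le
  have hR0 : 0 ≤ R := le_trans (norm_nonneg _) (hR _ hΦne.choose_spec)
  have hgbd : ∀ (x y : X), ∀ φ ∈ Φ, |ev φ x - ev φ y| ≤ 2 * R / α := by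
    intro x y φ hφ
    calc |ev φ x - ev φ y| ≤ |ev φ x| + |ev φ y| := abs_sub _ _
      _ ≤ ‖φ‖ / α + ‖φ‖ / α := add_le_add (habs φ x) (habs φ y)
      _ ≤ R / α + R / α := by
          gcongr <;> exact hR φ hφ
      _ = 2 * R / α := by ring
  -- integrability
  have hgint : ∀ x y : X, IntegrableOn (fun φ => |ev φ x - ev φ y| * f φ) Φ lam := by
    intro x y
    refine Integrable.mono' ((hfint.const_mul (2 * R / α)).integrableOn) ?_ ?_
    · exact ((((contev x).sub (contev y)).abs.aestronglyMeasurable).mul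
        hfint.aestronglyMeasurable).restrict
    · refine (ae_restrict_iff' hΦmeas).2 (ae_of_all _ fun φ hφ => ?_)
      rw [Real.norm_eq_abs, abs_of_nonneg (mul_nonneg (abs_nonneg _) (hf0 φ))]
      exact mul_le_mul_of_nonneg_right (hgbd x y φ hφ) (hf0 φ)
  -- basic facts about DX
  have hDbdd : ∀ x y : X, BddAbove (Set.range fun φ : Φ => |ev (φ : V) x - ev (φ : V) y|) := by
    intro x y
    refine ⟨2 * R / α, ?_⟩
    rintro - ⟨φ, rfl⟩
    exact hgbd x y φ φ.2
  have hgleD : ∀ (x y : X), ∀ φ ∈ Φ, |ev φ x - ev φ y| ≤ DX x y := by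
    intro x y φ hφ
    rw [hDX]
    exact le_ciSup (hDbdd x y) ⟨φ, hφ⟩
  have hDnonneg : ∀ x y : X, 0 ≤ DX x y := by
    intro x y; rw [hDX]; exact Real.iSup_nonneg fun φ => abs_nonneg _
  have hDself : ∀ x : X, DX x x = 0 := by
    intro x
    rw [hDX]
    simp only [sub_self, abs_zero]
    exact ciSup_const
  have hDtri : ∀ x y z : X, DX x z ≤ DX x y + DX y z := by
    intro x y z
    rw [hDX x z]
    refine ciSup_le fun φ => ?_
    calc |ev (φ : V) x - ev (φ : V) z|
        ≤ |ev (φ : V) x - ev (φ : V) y| + |ev (φ : V) y - ev (φ : V) z| := abs_sub_le _ _ _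
      _ ≤ DX x y + DX y z := add_le_add (hgleD x y φ φ.2) (hgleD y z φ φ.2)
  -- basic facts about ΔX
  have hΔnonneg : ∀ x y : X, 0 ≤ ΔX x y := by
    intro x y
    rw [hΔX]
    exact setIntegral_nonneg hΦmeas fun φ _ => mul_nonneg (abs_nonneg _) (hf0 φ)
  have hΔself : ∀ x : X, ΔX x x = 0 := by
    intro x; rw [hΔX]; simp
  have hΔtri : ∀ x y z : X, ΔX x z ≤ ΔX x y + ΔX y z := by
    intro x y z
    rw [hΔX x z, hΔX x y, hΔX y z, ← integral_add (hgint x y) (hgint y z)]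
    refine integral_mono (hgint x z) ((hgint x y).add (hgint y z)) fun φ => ?_
    simp only [Pi.add_apply]
    rw [← add_mul]
    exact mul_le_mul_of_nonneg_right (abs_sub_le _ _ _) (hf0 φ)
  have hΔleD : ∀ x y : X, ΔX x y ≤ DX x y := by
    intro x y
    have hfΦ : ∫ φ in Φ, f φ ∂lam ≤ 1 := by
      rw [← hf1]
      exact setIntegral_le_integral hfint (ae_of_all _ hf0)
    calc ΔX x y = ∫ φ in Φ, |ev φ x - ev φ y| * f φ ∂lam := hΔX x y
      _ ≤ ∫ φ in Φ, DX x y * f φ ∂lam := by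
          refine setIntegral_mono_on (hgint x y) ((hfint.const_mul _).integrableOn)
            hΦmeas fun φ hφ => ?_
          exact mul_le_mul_of_nonneg_right (hgleD x y φ hφ) (hf0 φ)
      _ = DX x y * ∫ φ in Φ, f φ ∂lam := integral_const_mul _ _
      _ ≤ DX x y * 1 := mul_le_mul_of_nonneg_left hfΦ (hDnonneg x y)
      _ = DX x y := mul_one _
  -- the key quantitative comparison: small ΔX forces small DX
  have key : ∀ ε : ℝ, 0 < ε → ∃ δ : ℝ, 0 < δ ∧ ∀ x y : X, ΔX x y < δ → DX x y < ε := by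
    intro ε hε
    set r := α * ε / 16 with hrdef
    have hr0 : 0 < r := by positivity
    obtain ⟨T, hTΦ, hTcov⟩ := hΦc.elim_nhds_subcover (fun φ => Metric.ball φ r)
      (fun φ _ => Metric.isOpen_ball.mem_nhds (Metric.mem_ball_self hr0))
    have hTne : T.Nonempty := by
      obtain ⟨φ₀, hφ₀⟩ := hΦne
      obtain ⟨t, ht⟩ := Set.mem_iUnion₂.1 (hTcov hφ₀)
      exact ⟨t, ht.1⟩
    set c := T.inf' hTne (fun t => (μ (Metric.ball t r)).toReal) with hcdef
    have hcpos : 0 < c := by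
      rw [hcdef, Finset.lt_inf'_iff]
      intro t ht
      have hts : t ∈ Φ := hTΦ t ht
      rw [hΦsupp] at hts
      have hpos := hts (Metric.ball t r) Metric.isOpen_ball (Metric.mem_ball_self hr0)
      exact ENNReal.toReal_pos hpos.ne' (hμfin _).ne
    refine ⟨ε / 4 * c, by positivity, fun x y hΔ => ?_⟩
    by_contra hcon
    push_neg at hcon
    -- find a witness φ₀ ∈ Φ with large value
    have hlt : ε / 2 < ⨆ φ : Φ, |ev (φ : V) x - ev (φ : V) y| := by
      rw [← hDX]; linarith
    obtain ⟨φ₀, hφ₀⟩ := exists_lt_of_lt_ciSup hlt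
    obtain ⟨t₀, ht₀⟩ := Set.mem_iUnion₂.1 (hTcov φ₀.2)
    have ht₀T : t₀ ∈ T := ht₀.1
    have hφ₀t₀ : ‖(φ₀ : V) - t₀‖ < r := by
      have := ht₀.2
      rwa [Metric.mem_ball, dist_eq_norm] at this
    -- on the ball around t₀, the integrand is at least ε/4
    have hball : ∀ ψ ∈ Φ ∩ Metric.ball t₀ r, ε / 4 ≤ |ev ψ x - ev ψ y| := by
      intro ψ hψ
      have hψt₀ : ‖ψ - t₀‖ < r := by
        have := hψ.2
        rwa [Metric.mem_ball, dist_eq_norm] at this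
      have hψφ₀ : ‖ψ - (φ₀ : V)‖ < 2 * r := by
        calc ‖ψ - (φ₀ : V)‖ = ‖(ψ - t₀) - ((φ₀ : V) - t₀)‖ := by rw [sub_sub_sub_cancel_right]
          _ ≤ ‖ψ - t₀‖ + ‖(φ₀ : V) - t₀‖ := norm_sub_le _ _
          _ < 2 * r := by linarith
      have hl := hlip x y ψ (φ₀ : V)
      have : |ev ψ x - ev ψ y| ≥ |ev (φ₀ : V) x - ev (φ₀ : V) y| - 2 / α * ‖ψ - (φ₀ : V)‖ := by
        have := abs_le.1 hl
        linarith [this.1]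
      have h2 : 2 / α * ‖ψ - (φ₀ : V)‖ ≤ 2 / α * (2 * r) :=
        mul_le_mul_of_nonneg_left hψφ₀.le (by positivity)
      have h3 : 2 / α * (2 * r) = ε / 4 := by
        rw [hrdef]; field_simp; ring
      linarith
    -- lower bound for ΔX x y
    have hBmeas : MeasurableSet (Φ ∩ Metric.ball t₀ r) :=
      hΦmeas.inter Metric.isOpen_ball.measurableSet
    have step1 : ∫ φ in Φ ∩ Metric.ball t₀ r, |ev φ x - ev φ y| * f φ ∂lam ≤ ΔX x y := by
      rw [hΔX]
      refine setIntegral_mono_set (hgint x y)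
        ((ae_restrict_iff' hΦmeas).2 (ae_of_all _ fun φ _ =>
          mul_nonneg (abs_nonneg _) (hf0 φ)))
        (HasSubset.Subset.eventuallyLE Set.inter_subset_left)
    have step2 : ∫ φ in Φ ∩ Metric.ball t₀ r, ε / 4 * f φ ∂lam ≤
        ∫ φ in Φ ∩ Metric.ball t₀ r, |ev φ x - ev φ y| * f φ ∂lam := by
      refine setIntegral_mono_on ((hfint.const_mul _).integrableOn)
        ((hgint x y).mono_set Set.inter_subset_left) hBmeas fun φ hφ => ?_
      exact mul_le_mul_of_nonneg_right (hball φ hφ) (hf0 φ)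
    have step3 : ∫ φ in Φ ∩ Metric.ball t₀ r, ε / 4 * f φ ∂lam =
        ε / 4 * (μ (Φ ∩ Metric.ball t₀ r)).toReal := by
      rw [integral_const_mul, hμs _ hBmeas, ENNReal.toReal_ofReal
        (setIntegral_nonneg hBmeas fun φ _ => hf0 φ)]
    have hμeq : μ (Φ ∩ Metric.ball t₀ r) = μ (Metric.ball t₀ r) := by
      refine le_antisymm (measure_mono Set.inter_subset_right) ?_
      calc μ (Metric.ball t₀ r) ≤ μ (Φ ∩ Metric.ball t₀ r ∪ Φᶜ) :=
            measure_mono (fun ψ hψ => by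
              by_cases h : ψ ∈ Φ
              · exact Or.inl ⟨h, hψ⟩
              · exact Or.inr h)
        _ ≤ μ (Φ ∩ Metric.ball t₀ r) + μ Φᶜ := measure_union_le _ _
        _ = μ (Φ ∩ Metric.ball t₀ r) := by rw [hcompl, add_zero]
    have hfinal : ε / 4 * c ≤ ΔX x y := by
      have hcle : c ≤ (μ (Metric.ball t₀ r)).toReal := Finset.inf'_le _ ht₀T
      have : ε / 4 * c ≤ ε / 4 * (μ (Φ ∩ Metric.ball t₀ r)).toReal := by
        rw [hμeq]
        exact mul_le_mul_of_nonneg_left hcle (by positivity)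
      linarith [step1, step2, step3.symm.le, step3.le]
    linarith
  -- topology comparisons
  constructor
  · -- distTopology ΔX = distTopology DX
    refine le_antisymm (le_generateFrom ?_)
      (le_generateFrom ?_)
    · -- each DX-ball is ΔX-open
      rintro s ⟨x, r, rfl⟩
      refine distTopology_isOpen fun y hy => ?_
      simp only [Set.mem_setOf_eq] at hy
      obtain ⟨δ, hδ0, hδ⟩ := key (r - DX x y) (by linarith)
      refine ⟨y, δ, by rwa [hΔself], fun z hz => ?_⟩
      have := hδ y z hz
      simp only [Set.mem_setOf_eq]
      calc DX x z ≤ DX x y + DX y z := hDtri x y z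
        _ < r := by linarith
    · -- each ΔX-ball is DX-open
      rintro s ⟨x, r, rfl⟩
      refine distTopology_isOpen fun y hy => ?_
      simp only [Set.mem_setOf_eq] at hy
      refine ⟨y, r - ΔX x y, by rw [hDself]; linarith, fun z hz => ?_⟩
      simp only [Set.mem_setOf_eq]
      calc ΔX x z ≤ ΔX x y + ΔX y z := hΔtri x y z
        _ ≤ ΔX x y + DX y z := by linarith [hΔleD y z]
        _ < r := by linarith
  · -- distTopology DX = initial topology
    refine le_antisymm (le_iInf fun φ => ?_) (le_generateFrom ?_)
    · -- DX-topology makes each evaluation continuous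
      have hcont : Continuous[distTopology DX, _] fun x => ev (φ : V) x := by
        letI := distTopology DX
        rw [continuous_def]
        intro s hs
        refine distTopology_isOpen fun y hy => ?_
        obtain ⟨ε, hε, hballs⟩ := Metric.isOpen_iff.1 hs _ hy
        refine ⟨y, ε, by rwa [hDself], fun z hz => ?_⟩
        apply hballs
        rw [Metric.mem_ball, Real.dist_eq]
        calc |ev (φ : V) z - ev (φ : V) y| ≤ DX y z := by
              rw [abs_sub_comm]; exact hgleD y z (φ : V) φ.2
          _ < ε := hz
      exact continuous_iff_le_induced.mp hcont
    · -- each DX-ball is open in the initial topology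
      rintro s ⟨x, r, rfl⟩
      letI t := ⨅ φ : Φ, TopologicalSpace.induced (fun x => ev (φ : V) x)
        (inferInstance : TopologicalSpace ℝ)
      rw [isOpen_iff_forall_mem_open]
      intro y hy
      simp only [Set.mem_setOf_eq] at hy
      set ε := r - DX x y with hεdef
      have hε : 0 < ε := by rw [hεdef]; linarith
      set r' := α * ε / 8 with hr'def
      have hr'0 : 0 < r' := by positivity
      obtain ⟨T, hTΦ, hTcov⟩ := hΦc.elim_nhds_subcover (fun φ => Metric.ball φ r')
        (fun φ _ => Metric.isOpen_ball.mem_nhds (Metric.mem_ball_self hr'0))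
      refine ⟨⋂ t₀ ∈ T, (fun z => ev t₀ z) ⁻¹' Metric.ball (ev t₀ y) (ε / 4),
        ?_, ?_, ?_⟩
      · -- contained in the ball
        intro z hz
        simp only [Set.mem_iInter, Set.mem_preimage, Metric.mem_ball, Real.dist_eq] at hz
        have hDyz : DX y z ≤ ε / 2 := by
          rw [hDX]
          refine ciSup_le fun φ => ?_
          obtain ⟨t₀, ht₀⟩ := Set.mem_iUnion₂.1 (hTcov φ.2)
          have hφt₀ : ‖(φ : V) - t₀‖ < r' := by
            have := ht₀.2
            rwa [Metric.mem_ball, dist_eq_norm] at this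
          have hl := hlip y z (φ : V) t₀
          have h2 : 2 / α * ‖(φ : V) - t₀‖ ≤ 2 / α * r' :=
            mul_le_mul_of_nonneg_left hφt₀.le (by positivity)
          have h3 : 2 / α * r' = ε / 4 := by
            rw [hr'def]; field_simp; ring
          have h4 : |ev t₀ y - ev t₀ z| < ε / 4 := by
            rw [abs_sub_comm]; exact hz t₀ ht₀.1
          have := abs_le.1 hl
          linarith [this.1, this.2]
        simp only [Set.mem_setOf_eq]
        calc DX x z ≤ DX x y + DX y z := hDtri x y z
          _ ≤ DX x y + ε / 2 := by linarith
          _ < r := by rw [hεdef] at hε ⊢; linarith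
      · -- the set is t-open
        refine isOpen_biInter_finset fun t₀ ht₀ => ?_
        have hle : t ≤ TopologicalSpace.induced (fun z => ev t₀ z)
            (inferInstance : TopologicalSpace ℝ) := by
          have : t ≤ TopologicalSpace.induced
              (fun z => ev ((⟨t₀, hTΦ t₀ ht₀⟩ : Φ) : V) z)
              (inferInstance : TopologicalSpace ℝ) := iInf_le _ _
          exact this
        exact hle _ (isOpen_induced Metric.isOpen_ball)
      · -- y belongs to the set
        simp only [Set.mem_iInter, Set.mem_preimage, Metric.mem_ball]
        intro t₀ _
        rw [dist_self]
        linarith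
end
end

section
/- The pseudo-metric space (X, D_X) is totally bounded, and consequently the pseudo-metric space (X, Δ_X) is totally bounded as well. -/
open MeasureTheory Filter Topology RealInnerProductSpace

noncomputable section

theorem statement4
    {X : Type*} {V : Type*} [NormedAddCommGroup V] [InnerProductSpace ℝ V]
    [FiniteDimensional ℝ V] [MeasurableSpace V] [BorelSpace V]
    (ev : V →ₗ[ℝ] (X → ℝ)) (hev : Function.Injective ev)
    (hbdd : ∀ φ : V, BddAbove (Set.range fun x => |ev φ x|))
    (α β : ℝ) (hα : 0 < α) (hβ : 0 < β)
    (hnorm₁ : ∀ φ : V, α * (⨆ x, |ev φ x|) ≤ ‖φ‖)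
    (hnorm₂ : ∀ φ : V, ‖φ‖ ≤ β * (⨆ x, |ev φ x|))
    (Φ : Set V)
    (lam : Measure V) (f : V → ℝ) (hf0 : ∀ φ, 0 ≤ f φ)
    (hfint : Integrable f lam) (hf1 : ∫ φ, f φ ∂lam = 1)
    (hΦsupp : Φ = {φ : V | ∀ U : Set V, IsOpen U → φ ∈ U →
      0 < (lam.withDensity fun ψ => ENNReal.ofReal (f ψ)) U})
    (hΦc : IsCompact Φ)
    (ΔX DX : X → X → ℝ)
    (hΔX : ∀ x₁ x₂, ΔX x₁ x₂ = ∫ φ in Φ, |ev φ x₁ - ev φ x₂| * f φ ∂lam)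
    (hDX : ∀ x₁ x₂, DX x₁ x₂ = ⨆ φ : Φ, |ev (φ : V) x₁ - ev (φ : V) x₂|)
    :
    (∀ ε > (0 : ℝ), ∃ S : Set X, S.Finite ∧ ∀ x : X, ∃ y ∈ S, DX x y < ε) ∧
    (∀ ε > (0 : ℝ), ∃ S : Set X, S.Finite ∧ ∀ x : X, ∃ y ∈ S, ΔX x y < ε) := by
  -- trivial case: X empty
  classical
  rcases isEmpty_or_nonempty X with hX | hX
  · exact ⟨fun ε hε => ⟨∅, Set.finite_empty, fun x => absurd (Nonempty.intro x) (not_nonempty_iff.2 hX)⟩,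
      fun ε hε => ⟨∅, Set.finite_empty, fun x => absurd (Nonempty.intro x) (not_nonempty_iff.2 hX)⟩⟩
  -- evaluation as continuous linear functionals
  set Lc : X → (V →L[ℝ] ℝ) := fun x =>
    LinearMap.toContinuousLinearMap ((LinearMap.proj x).comp ev) with hLc
  have hLcval : ∀ x (φ : V), Lc x φ = ev φ x := fun x φ => rfl
  have hLb : ∀ x (φ : V), |ev φ x| ≤ α⁻¹ * ‖φ‖ := by
    intro x φ
    have h1 : |ev φ x| ≤ ⨆ x', |ev φ x'| := le_ciSup (hbdd φ) x
    have h2 : (⨆ x', |ev φ x'|) ≤ α⁻¹ * ‖φ‖ := by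
      rw [le_inv_mul_iff₀ hα]
      exact hnorm₁ φ
    exact h1.trans h2
  -- boundedness of the sup family over Φ
  have hcont : ∀ x₁ x₂ : X, Continuous fun φ : V => |ev φ x₁ - ev φ x₂| := by
    intro x₁ x₂
    have : (fun φ : V => |ev φ x₁ - ev φ x₂|) = fun φ => |(Lc x₁ - Lc x₂) φ| := by
      funext φ; simp [hLcval]
    rw [this]
    exact ((Lc x₁ - Lc x₂).continuous).abs
  have hbddΦ : ∀ x₁ x₂ : X, BddAbove (Set.range fun φ : Φ => |ev (φ : V) x₁ - ev (φ : V) x₂|) := by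
    intro x₁ x₂
    have := hΦc.bddAbove_image (hcont x₁ x₂).continuousOn
    rwa [Set.image_eq_range] at this
  have hDX0 : ∀ x₁ x₂, 0 ≤ DX x₁ x₂ := by
    intro x₁ x₂
    rw [hDX]
    rcases Set.eq_empty_or_nonempty Φ with h | h
    · haveI : IsEmpty Φ := by simp [h]
      simp [Real.iSup_of_isEmpty]
    · obtain ⟨φ₀, hφ₀⟩ := h
      exact le_trans (abs_nonneg _) (le_ciSup (hbddΦ x₁ x₂) ⟨φ₀, hφ₀⟩)
  -- first statement
  have key1 : ∀ ε > (0 : ℝ), ∃ S : Set X, S.Finite ∧ ∀ x : X, ∃ y ∈ S, DX x y < ε := by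
    intro ε hε
    rcases Set.eq_empty_or_nonempty Φ with hΦe | hΦne
    · refine ⟨{Classical.arbitrary X}, Set.finite_singleton _, fun x => ⟨_, rfl, ?_⟩⟩
      haveI : IsEmpty Φ := by simp [hΦe]
      rw [hDX, Real.iSup_of_isEmpty]; exact hε
    -- bound on norms in Φ
    obtain ⟨M₀, hM₀⟩ := hΦc.isBounded.exists_norm_le
    set M := max M₀ 0 with hMdef
    have hM : ∀ φ ∈ Φ, ‖φ‖ ≤ M := fun φ hφ => le_trans (hM₀ φ hφ) (le_max_left _ _)
    have hM0 : 0 ≤ M := le_max_right _ _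
    -- the range of Lc is totally bounded
    have hTB : TotallyBounded (Set.range Lc) := by
      refine (isCompact_closedBall (0 : V →L[ℝ] ℝ) α⁻¹).totallyBounded.subset ?_
      rintro _ ⟨x, rfl⟩
      rw [Metric.mem_closedBall, dist_zero_right]
      refine ContinuousLinearMap.opNorm_le_bound _ (inv_nonneg.2 hα.le) fun φ => ?_
      rw [mul_comm]
      calc ‖Lc x φ‖ = |ev φ x| := by rw [hLcval]; exact Real.norm_eq_abs _
        _ ≤ α⁻¹ * ‖φ‖ := hLb x φ
        _ = ‖φ‖ * α⁻¹ := mul_comm _ _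
    set δ := ε / (M + 1) with hδdef
    have hδ : 0 < δ := div_pos hε (by linarith)
    obtain ⟨t, hts, htf, htcov⟩ := totallyBounded_iff_subset.mp hTB
      {p | dist p.1 p.2 < δ} (Metric.dist_mem_uniformity hδ)
    -- pick preimages
    have hpick : ∀ c ∈ t, ∃ y : X, Lc y = c := fun c hc => hts hc
    set pick : (V →L[ℝ] ℝ) → X := fun c =>
      if h : ∃ y : X, Lc y = c then h.choose else Classical.arbitrary X with hpickdef
    refine ⟨pick '' t, htf.image _, fun x => ?_⟩
    obtain ⟨c, hc⟩ := Set.mem_iUnion₂.mp (htcov ⟨x, rfl⟩)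
    obtain ⟨hct, hdist⟩ := hc
    have hcex : ∃ y : X, Lc y = c := hpick c hct
    refine ⟨pick c, Set.mem_image_of_mem _ hct, ?_⟩
    have hLcy : Lc (pick c) = c := by
      rw [hpickdef]; simp only [hcex, dif_pos]; exact hcex.choose_spec
    have hdist' : ‖Lc x - Lc (pick c)‖ < δ := by
      rw [hLcy, ← dist_eq_norm]; exact hdist
    rw [hDX]
    have hub : ∀ φ : Φ, |ev (φ : V) x - ev (φ : V) (pick c)| ≤ ‖Lc x - Lc (pick c)‖ * (M + 1) := by
      intro φ
      have h1 : |ev (φ : V) x - ev (φ : V) (pick c)| = ‖(Lc x - Lc (pick c)) (φ : V)‖ := by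
        simp [hLcval, Real.norm_eq_abs]
      rw [h1]
      calc ‖(Lc x - Lc (pick c)) (φ : V)‖ ≤ ‖Lc x - Lc (pick c)‖ * ‖(φ : V)‖ :=
            (Lc x - Lc (pick c)).le_opNorm _
        _ ≤ ‖Lc x - Lc (pick c)‖ * (M + 1) := by
            refine mul_le_mul_of_nonneg_left ?_ (norm_nonneg _)
            have := hM _ φ.2; linarith
    haveI : Nonempty Φ := hΦne.to_subtype
    calc (⨆ φ : Φ, |ev (φ : V) x - ev (φ : V) (pick c)|)
        ≤ ‖Lc x - Lc (pick c)‖ * (M + 1) := ciSup_le hub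
      _ < δ * (M + 1) := by
          exact mul_lt_mul_of_pos_right hdist' (by linarith)
      _ = ε := by rw [hδdef]; field_simp
  -- ΔX ≤ DX
  have hle : ∀ x₁ x₂, ΔX x₁ x₂ ≤ DX x₁ x₂ := by
    intro x₁ x₂
    rw [hΔX]
    rcases Set.eq_empty_or_nonempty Φ with hΦe | hΦne
    · rw [hΦe]; simp [hDX0 x₁ x₂]
    haveI : Nonempty Φ := hΦne.to_subtype
    have hΦm : MeasurableSet Φ := hΦc.isClosed.measurableSet
    have hstep : ∫ φ in Φ, |ev φ x₁ - ev φ x₂| * f φ ∂lam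
        ≤ ∫ φ in Φ, DX x₁ x₂ * f φ ∂lam := by
      refine integral_mono_of_nonneg ?_ ((hfint.restrict).const_mul _) ?_
      · exact Filter.Eventually.of_forall fun φ => mul_nonneg (abs_nonneg _) (hf0 φ)
      · refine (ae_restrict_iff' hΦm).2 (Filter.Eventually.of_forall fun φ hφ => ?_)
        refine mul_le_mul_of_nonneg_right ?_ (hf0 φ)
        rw [hDX]
        exact le_ciSup (hbddΦ x₁ x₂) ⟨φ, hφ⟩
    refine hstep.trans ?_
    rw [MeasureTheory.integral_const_mul]
    calc DX x₁ x₂ * ∫ φ in Φ, f φ ∂lam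
        ≤ DX x₁ x₂ * 1 := by
          refine mul_le_mul_of_nonneg_left ?_ (hDX0 x₁ x₂)
          rw [← hf1]
          exact setIntegral_le_integral hfint (Filter.Eventually.of_forall hf0)
      _ = DX x₁ x₂ := mul_one _
  exact ⟨key1, fun ε hε => by
    obtain ⟨S, hSf, hS⟩ := key1 ε hε
    exact ⟨S, hSf, fun x => by
      obtain ⟨y, hyS, hy⟩ := hS x
      exact ⟨y, hyS, lt_of_le_of_lt (hle x y) hy⟩⟩⟩
end
end

section
/- If the pseudo-metric space (X, Δ_X) is complete, then it is compact; likewise, if (X, D_X) is complete, then it is compact. -/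
open MeasureTheory Filter Topology RealInnerProductSpace

noncomputable section

theorem key {X W : Type*} [NormedAddCommGroup W] (d : X → X → ℝ)
    (hself : ∀ x, d x x = 0) (hsymm : ∀ x y, d x y = d y x)
    (htri : ∀ x y z, d x z ≤ d x y + d y z)
    (L : X → W) (K : Set W) (hK : IsCompact K) (hLK : ∀ x, L x ∈ K)
    (M : ℝ) (hM : 0 ≤ M) (hd : ∀ x y, d x y ≤ M * ‖L x - L y‖)
    (hcomp : ∀ u : ℕ → X,
        (∀ ε > (0 : ℝ), ∃ N : ℕ, ∀ m ≥ N, ∀ n ≥ N, d (u m) (u n) < ε) →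
        ∃ x : X, ∀ ε > (0 : ℝ), ∃ N : ℕ, ∀ n ≥ N, d (u n) x < ε) :
    @CompactSpace X (distTopology d) := by
  letI P : PseudoMetricSpace X :=
    { dist := d, dist_self := hself, dist_comm := hsymm, dist_triangle := htri }
  have hdist : ∀ x y : X, dist x y = d x y := fun _ _ => rfl
  have hball : ∀ (x : X) (r : ℝ), {y | d x y < r} = Metric.ball x r := by
    intro x r; ext y; simp only [Metric.mem_ball, Set.mem_setOf_eq, hdist, hsymm x y]
  have htopo : distTopology d = P.toUniformSpace.toTopologicalSpace := by
    apply le_antisymm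
    · intro s hs
      rw [Metric.isOpen_iff] at hs
      choose r hr hsub using hs
      have hs_eq : s = ⋃ (x : X) (hx : x ∈ s), Metric.ball x (r x hx) := by
        apply Set.Subset.antisymm
        · intro x hx
          exact Set.mem_iUnion₂.mpr ⟨x, hx, Metric.mem_ball_self (hr x hx)⟩
        · intro y hy
          obtain ⟨x, hx, hxy⟩ := Set.mem_iUnion₂.mp hy
          exact hsub x hx hxy
      rw [hs_eq]
      refine @isOpen_iUnion X X (distTopology d) _ (fun x => ?_)
      refine @isOpen_iUnion X (x ∈ s) (distTopology d) _ (fun hx => ?_)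
      exact TopologicalSpace.GenerateOpen.basic _ ⟨x, r x hx, (hball x (r x hx)).symm⟩
    · apply le_generateFrom
      rintro s ⟨x, r, rfl⟩
      rw [hball]
      exact Metric.isOpen_ball
  haveI : CompleteSpace X := by
    apply Metric.complete_of_cauchySeq_tendsto
    intro u hu
    rw [Metric.cauchySeq_iff] at hu
    obtain ⟨x, hx⟩ := hcomp u (by simpa [hdist] using hu)
    refine ⟨x, Metric.tendsto_atTop.mpr ?_⟩
    simpa [hdist] using hx
  have htb : TotallyBounded (Set.univ : Set X) := by
    rw [Metric.totallyBounded_iff]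
    intro ε hε
    have hKtb : TotallyBounded (L '' Set.univ) :=
      (hK.totallyBounded).subset (by rintro _ ⟨x, -, rfl⟩; exact hLK x)
    rw [totallyBounded_iff_subset] at hKtb
    obtain ⟨t, hts, htfin, hcov⟩ := hKtb _
      (Metric.dist_mem_uniformity (show (0:ℝ) < ε / (M + 1) by positivity))
    choose g hg using fun (z : W) (hz : z ∈ t) => hts hz
    classical
    obtain ⟨s, hsfin, hscov⟩ : ∃ s : Set X, s.Finite ∧
        ∀ y : X, ∃ x ∈ s, d x y < ε := by
      refine ⟨{y | ∃ z hz, g z hz = y}, htfin.dependent_image g, ?_⟩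
      intro y
      have hmem : L y ∈ L '' Set.univ := ⟨y, trivial, rfl⟩
      obtain ⟨z, hz, hzy⟩ := Set.mem_iUnion₂.mp (hcov hmem)
      simp only [Set.mem_setOf_eq] at hzy
      refine ⟨g z hz, ⟨z, hz, rfl⟩, ?_⟩
      have h1 : d (g z hz) y ≤ M * ‖L (g z hz) - L y‖ := hd _ _
      have h2 : ‖L (g z hz) - L y‖ = dist (L y) z := by
        rw [(hg z hz).2, dist_eq_norm, ← norm_neg, neg_sub]
      have h3 : M * dist (L y) z < ε := by
        calc M * dist (L y) z ≤ M * (ε / (M+1)) :=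
              mul_le_mul_of_nonneg_left (le_of_lt hzy) hM
          _ < ε := by
              rw [mul_div_assoc', div_lt_iff₀ (by positivity)]
              nlinarith
      calc d (g z hz) y ≤ M * dist (L y) z := by rw [← h2]; exact h1
        _ < ε := h3
    refine ⟨s, hsfin, fun y _ => ?_⟩
    obtain ⟨x, hxs, hxy⟩ := hscov y
    exact Set.mem_iUnion₂.mpr ⟨x, hxs, by rwa [Metric.mem_ball, hdist, hsymm]⟩
  rw [htopo]
  have : IsCompact (Set.univ : Set X) :=
    isCompact_iff_totallyBounded_isComplete.mpr ⟨htb, completeSpace_iff_isComplete_univ.mp ‹_›⟩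
  exact ⟨this⟩

theorem statement5
    {X : Type*} {V : Type*} [NormedAddCommGroup V] [InnerProductSpace ℝ V]
    [FiniteDimensional ℝ V] [MeasurableSpace V] [BorelSpace V]
    (ev : V →ₗ[ℝ] (X → ℝ)) (hev : Function.Injective ev)
    (hbdd : ∀ φ : V, BddAbove (Set.range fun x => |ev φ x|))
    (α β : ℝ) (hα : 0 < α) (hβ : 0 < β)
    (hnorm₁ : ∀ φ : V, α * (⨆ x, |ev φ x|) ≤ ‖φ‖)
    (hnorm₂ : ∀ φ : V, ‖φ‖ ≤ β * (⨆ x, |ev φ x|))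
    (Φ : Set V)
    (lam : Measure V) (f : V → ℝ) (hf0 : ∀ φ, 0 ≤ f φ)
    (hfint : Integrable f lam) (hf1 : ∫ φ, f φ ∂lam = 1)
    (hΦsupp : Φ = {φ : V | ∀ U : Set V, IsOpen U → φ ∈ U →
      0 < (lam.withDensity fun ψ => ENNReal.ofReal (f ψ)) U})
    (hΦc : IsCompact Φ)
    (ΔX DX : X → X → ℝ)
    (hΔX : ∀ x₁ x₂, ΔX x₁ x₂ = ∫ φ in Φ, |ev φ x₁ - ev φ x₂| * f φ ∂lam)
    (hDX : ∀ x₁ x₂, DX x₁ x₂ = ⨆ φ : Φ, |ev (φ : V) x₁ - ev (φ : V) x₂|)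
    :
    ((∀ u : ℕ → X,
        (∀ ε > (0 : ℝ), ∃ N : ℕ, ∀ m ≥ N, ∀ n ≥ N, ΔX (u m) (u n) < ε) →
        ∃ x : X, ∀ ε > (0 : ℝ), ∃ N : ℕ, ∀ n ≥ N, ΔX (u n) x < ε) →
      @CompactSpace X (distTopology ΔX)) ∧
    ((∀ u : ℕ → X,
        (∀ ε > (0 : ℝ), ∃ N : ℕ, ∀ m ≥ N, ∀ n ≥ N, DX (u m) (u n) < ε) →
        ∃ x : X, ∀ ε > (0 : ℝ), ∃ N : ℕ, ∀ n ≥ N, DX (u n) x < ε) →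
      @CompactSpace X (distTopology DX)) := by
  -- the evaluation maps as continuous linear functionals
  set L : X → (V →L[ℝ] ℝ) :=
    fun x => LinearMap.toContinuousLinearMap ((LinearMap.proj x).comp ev) with hL
  have hLapp : ∀ (x : X) (φ : V), L x φ = ev φ x := fun x φ => rfl
  have habs : ∀ (φ : V) (x : X), |ev φ x| ≤ (1 / α) * ‖φ‖ := by
    intro φ x
    have h1 : |ev φ x| ≤ ⨆ x, |ev φ x| := le_ciSup (hbdd φ) x
    have h2 : (⨆ x, |ev φ x|) ≤ (1/α) * ‖φ‖ := by
      rw [div_mul_eq_mul_div, one_mul, le_div_iff₀ hα, mul_comm]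
      exact hnorm₁ φ
    exact h1.trans h2
  have hLnorm : ∀ x : X, ‖L x‖ ≤ 1 / α := by
    intro x
    refine ContinuousLinearMap.opNorm_le_bound _ (by positivity) (fun φ => ?_)
    rw [hLapp, Real.norm_eq_abs]
    exact habs φ x
  have hLK : ∀ x, L x ∈ Metric.closedBall (0 : V →L[ℝ] ℝ) (1/α) := by
    intro x
    rw [Metric.mem_closedBall, dist_zero_right]
    exact hLnorm x
  have hK : IsCompact (Metric.closedBall (0 : V →L[ℝ] ℝ) (1/α)) :=
    isCompact_closedBall _ _
  -- a uniform bound on Φ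
  obtain ⟨C0, hC0⟩ := hΦc.isBounded.subset_closedBall 0
  set C : ℝ := max C0 0 with hCdef
  have hC : 0 ≤ C := le_max_right _ _
  have hΦC : ∀ φ ∈ Φ, ‖φ‖ ≤ C := by
    intro φ hφ
    have := hC0 hφ
    rw [Metric.mem_closedBall, dist_zero_right] at this
    exact this.trans (le_max_left _ _)
  have hDd : ∀ (x y : X) (φ : V), φ ∈ Φ → |ev φ x - ev φ y| ≤ C * ‖L x - L y‖ := by
    intro x y φ hφ
    have h1 : |ev φ x - ev φ y| = ‖(L x - L y) φ‖ := by
      rw [ContinuousLinearMap.sub_apply, hLapp, hLapp, Real.norm_eq_abs]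
    rw [h1]
    calc ‖(L x - L y) φ‖ ≤ ‖L x - L y‖ * ‖φ‖ := ContinuousLinearMap.le_opNorm _ _
      _ ≤ ‖L x - L y‖ * C := mul_le_mul_of_nonneg_left (hΦC φ hφ) (norm_nonneg _)
      _ = C * ‖L x - L y‖ := mul_comm _ _
  constructor
  · -- ΔX part
    intro hcomp
    have hΦm : MeasurableSet Φ := hΦc.isClosed.measurableSet
    have hcont : ∀ x y : X, Continuous (fun φ : V => |ev φ x - ev φ y|) := by
      intro x y
      have : (fun φ : V => |ev φ x - ev φ y|) = fun φ => |(L x) φ - (L y) φ| := rfl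
      rw [this]
      exact ((L x).continuous.sub (L y).continuous).abs
    have hInt : ∀ x y : X, IntegrableOn (fun φ => |ev φ x - ev φ y| * f φ) Φ lam := by
      intro x y
      refine Integrable.mono' (((hfint.restrict (s := Φ))).const_mul (C * ‖L x - L y‖))
        (((hcont x y).aestronglyMeasurable).mul hfint.1.restrict) ?_
      filter_upwards [ae_restrict_mem hΦm] with φ hφ
      rw [Real.norm_eq_abs, abs_mul, abs_of_nonneg (hf0 φ), abs_abs]
      exact mul_le_mul_of_nonneg_right (hDd x y φ hφ) (hf0 φ)
    have hself : ∀ x, ΔX x x = 0 := by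
      intro x; rw [hΔX]; simp
    have hsymm : ∀ x y, ΔX x y = ΔX y x := by
      intro x y; rw [hΔX, hΔX]
      congr 1; funext φ; rw [abs_sub_comm]
    have htri : ∀ x y z, ΔX x z ≤ ΔX x y + ΔX y z := by
      intro x y z
      rw [hΔX, hΔX, hΔX, ← integral_add (hInt x y) (hInt y z)]
      refine setIntegral_mono_on (hInt x z) ((hInt x y).add (hInt y z)) hΦm (fun φ hφ => ?_)
      have : |ev φ x - ev φ z| ≤ |ev φ x - ev φ y| + |ev φ y - ev φ z| := abs_sub_le _ _ _
      nlinarith [hf0 φ, abs_nonneg (ev φ x - ev φ y), abs_nonneg (ev φ y - ev φ z)]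
    have hle : ∀ x y, ΔX x y ≤ C * ‖L x - L y‖ := by
      intro x y
      rw [hΔX]
      have h1 : ∫ φ in Φ, |ev φ x - ev φ y| * f φ ∂lam
          ≤ ∫ φ in Φ, (C * ‖L x - L y‖) * f φ ∂lam :=
        setIntegral_mono_on (hInt x y) ((hfint.restrict (s := Φ)).const_mul _) hΦm
          (fun φ hφ => mul_le_mul_of_nonneg_right (hDd x y φ hφ) (hf0 φ))
      have h2 : ∫ φ in Φ, (C * ‖L x - L y‖) * f φ ∂lam
          = (C * ‖L x - L y‖) * ∫ φ in Φ, f φ ∂lam := integral_const_mul _ _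
      have h3 : ∫ φ in Φ, f φ ∂lam ≤ 1 := by
        rw [← hf1]
        exact setIntegral_le_integral hfint (Eventually.of_forall hf0)
      have h4 : (C * ‖L x - L y‖) * ∫ φ in Φ, f φ ∂lam ≤ (C * ‖L x - L y‖) * 1 :=
        mul_le_mul_of_nonneg_left h3 (by positivity)
      calc _ ≤ _ := h1
        _ = _ := h2
        _ ≤ _ := h4
        _ = C * ‖L x - L y‖ := mul_one _
    exact key ΔX hself hsymm htri L _ hK hLK C hC hle hcomp
  · -- DX part
    intro hcomp
    have hbddD : ∀ x y : X, BddAbove (Set.range fun φ : Φ => |ev (φ:V) x - ev (φ:V) y|) := by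
      intro x y
      refine ⟨C * ‖L x - L y‖, ?_⟩
      rintro _ ⟨φ, rfl⟩
      exact hDd x y φ φ.2
    have hself : ∀ x, DX x x = 0 := by
      intro x; rw [hDX]
      simp only [sub_self, abs_zero]
      exact le_antisymm (Real.iSup_le (fun _ => le_rfl) le_rfl)
        (Real.iSup_nonneg (fun _ => le_rfl))
    have hsymm : ∀ x y, DX x y = DX y x := by
      intro x y; rw [hDX, hDX]
      congr 1; funext φ; rw [abs_sub_comm]
    have htri : ∀ x y z, DX x z ≤ DX x y + DX y z := by
      intro x y z
      rw [hDX x z, hDX x y, hDX y z]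
      refine Real.iSup_le (fun φ => ?_)
        (add_nonneg (Real.iSup_nonneg fun _ => abs_nonneg _)
          (Real.iSup_nonneg fun _ => abs_nonneg _))
      calc |ev (φ:V) x - ev (φ:V) z|
          ≤ |ev (φ:V) x - ev (φ:V) y| + |ev (φ:V) y - ev (φ:V) z| := abs_sub_le _ _ _
        _ ≤ _ := add_le_add (le_ciSup (hbddD x y) φ) (le_ciSup (hbddD y z) φ)
    have hle : ∀ x y, DX x y ≤ C * ‖L x - L y‖ := by
      intro x y
      rw [hDX]
      exact Real.iSup_le (fun φ => hDd x y φ φ.2) (by positivity)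
    exact key DX hself hsymm htri L _ hK hLK C hC hle hcomp
end
end

section
/- The natural action ρ : Φ × G → Φ defined by ρ(φ,g) = φ∘g is continuous, where Φ carries the topology induced by the norm ‖·‖_V, G carries the topology induced by the pseudo-distance Δ_G, and Φ × G carries the product topology. -/
open MeasureTheory Filter Topology RealInnerProductSpace

noncomputable section

/-!
Since every `ρ g` preserves the inner product, it is an isometry, so the action is 1-Lipschitz in
`φ` and it suffices to prove continuity in `g` for fixed `φ₀ ∈ Φ`. If `‖ρ g φ₀ - ρ g₀ φ₀‖ ≥ ε`, the
triangle inequality gives `‖ρ g ψ - ρ g₀ ψ‖ ≥ ε / 2` for all `ψ` within `ε / 4` of `φ₀`. As `φ₀`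
lies in the support of `μ`, this ball meets `Φ` in a set of positive mass `c`, whence
`Δ_G(g₀, g) ≥ ε c / 2`.
-/

theorem isometry_of_inner_map_map {E F : Type*} [NormedAddCommGroup E] [InnerProductSpace ℝ E]
    [NormedAddCommGroup F] [InnerProductSpace ℝ F] {T : E → F}
    (hT : ∀ x y, ⟪T x, T y⟫ = ⟪x, y⟫) : Isometry T := by
  refine Isometry.of_dist_eq fun x y => ?_
  rw [dist_eq_norm, dist_eq_norm, ← sq_eq_sq₀ (norm_nonneg _) (norm_nonneg _)]
  simp only [← real_inner_self_eq_norm_sq, inner_sub_left, inner_sub_right, hT]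

theorem setOf_lt_mem_nhds_distTopology {G : Type*} {d : G → G → ℝ} {x : G} {r : ℝ}
    (h : d x x < r) : {y | d x y < r} ∈ @nhds G (distTopology d) x :=
  @IsOpen.mem_nhds G (distTopology d) _ _
    (TopologicalSpace.isOpen_generateFrom_of_mem ⟨x, r, rfl⟩) h

section

variable {V W : Type*} [MetricSpace V] [MeasurableSpace V] [OpensMeasurableSpace V]
  [PseudoMetricSpace W] {lam : Measure V} {f : V → ℝ} {Φ : Set V}

theorem integrableOn_dist_mul (hΦ : IsCompact Φ) (hf : Integrable f lam) {T₁ T₂ : V → W}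
    (h₁ : Continuous T₁) (h₂ : Continuous T₂) :
    IntegrableOn (fun ψ => dist (T₁ ψ) (T₂ ψ) * f ψ) Φ lam := by
  have hcont : Continuous fun ψ => dist (T₁ ψ) (T₂ ψ) := h₁.dist h₂
  obtain ⟨C, hC⟩ := hΦ.exists_bound_of_continuousOn hcont.continuousOn
  exact hf.restrict.bdd_mul hcont.aestronglyMeasurable.restrict
    ((ae_restrict_iff' hΦ.measurableSet).mpr (ae_of_all _ hC))

theorem dist_sub_mul_setIntegral_le (hf0 : ∀ ψ, 0 ≤ f ψ) (hf : Integrable f lam)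
    (hΦ : IsCompact Φ) {T₁ T₂ : V → W} (h₁ : LipschitzWith 1 T₁) (h₂ : LipschitzWith 1 T₂)
    (φ₀ : V) (r : ℝ) :
    (dist (T₁ φ₀) (T₂ φ₀) - 2 * r) * ∫ ψ in Metric.ball φ₀ r ∩ Φ, f ψ ∂lam ≤
      ∫ ψ in Φ, dist (T₁ ψ) (T₂ ψ) * f ψ ∂lam := by
  have hint := integrableOn_dist_mul hΦ hf h₁.continuous h₂.continuous
  have hpt : ∀ ψ ∈ Metric.ball φ₀ r, dist (T₁ φ₀) (T₂ φ₀) - 2 * r ≤ dist (T₁ ψ) (T₂ ψ) := by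
    intro ψ hψ
    have h₁ψ := h₁.dist_le_mul φ₀ ψ
    have h₂ψ := h₂.dist_le_mul ψ φ₀
    rw [Metric.mem_ball, dist_comm] at hψ
    simp only [NNReal.coe_one, one_mul] at h₁ψ h₂ψ
    linarith [dist_triangle4 (T₁ φ₀) (T₁ ψ) (T₂ ψ) (T₂ φ₀), dist_comm ψ φ₀]
  calc _ = ∫ ψ in Metric.ball φ₀ r ∩ Φ, (dist (T₁ φ₀) (T₂ φ₀) - 2 * r) * f ψ ∂lam :=
        (integral_const_mul _ _).symm
    _ ≤ ∫ ψ in Metric.ball φ₀ r ∩ Φ, dist (T₁ ψ) (T₂ ψ) * f ψ ∂lam :=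
        setIntegral_mono_on (hf.restrict.const_mul _) (hint.mono_set Set.inter_subset_right)
          (measurableSet_ball.inter hΦ.measurableSet)
          fun ψ hψ => mul_le_mul_of_nonneg_right (hpt ψ hψ.1) (hf0 ψ)
    _ ≤ _ := setIntegral_mono_set hint
        (ae_of_all _ fun ψ => mul_nonneg dist_nonneg (hf0 ψ))
        Set.inter_subset_right.eventuallyLE

theorem continuous_distTopology_apply {G : Type*} (hf0 : ∀ ψ, 0 ≤ f ψ) (hf : Integrable f lam)
    (hΦ : IsCompact Φ) {ρ : G → V → W} (hρ : ∀ g, LipschitzWith 1 (ρ g)) {d : G → G → ℝ}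
    (hd : ∀ g₁ g₂, d g₁ g₂ = ∫ ψ in Φ, dist (ρ g₁ ψ) (ρ g₂ ψ) * f ψ ∂lam) {φ₀ : V}
    (hφ₀ : ∀ r > 0, 0 < ∫ ψ in Metric.ball φ₀ r ∩ Φ, f ψ ∂lam) :
    @Continuous G W (distTopology d) _ fun g => ρ g φ₀ := by
  let _ := distTopology d
  refine continuous_iff_continuousAt.mpr fun g₀ => Metric.tendsto_nhds.mpr fun ε hε => ?_
  have hc := hφ₀ (ε / 4) (by positivity)
  set c := ∫ ψ in Metric.ball φ₀ (ε / 4) ∩ Φ, f ψ ∂lam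
  have hd₀ : d g₀ g₀ < ε / 2 * c := by simpa [hd] using mul_pos (half_pos hε) hc
  filter_upwards [setOf_lt_mem_nhds_distTopology hd₀] with g hg
  have hle := dist_sub_mul_setIntegral_le hf0 hf hΦ (hρ g₀) (hρ g) φ₀ (ε / 4)
  rw [← hd] at hle
  have := lt_of_mul_lt_mul_right (hle.trans_lt hg) hc.le
  rw [dist_comm]
  linarith

theorem setIntegral_ball_inter_support_pos [HereditarilyLindelofSpace V]
    (hf0 : ∀ ψ, 0 ≤ f ψ) (hf : Integrable f lam) {φ₀ : V}
    (hφ₀ : φ₀ ∈ (lam.withDensity fun ψ => ENNReal.ofReal (f ψ)).support) {r : ℝ} (hr : 0 < r) :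
    0 < ∫ ψ in Metric.ball φ₀ r ∩ (lam.withDensity fun ψ => ENNReal.ofReal (f ψ)).support,
      f ψ ∂lam := by
  set μ := lam.withDensity fun ψ => ENNReal.ofReal (f ψ)
  have : IsFiniteMeasure μ := isFiniteMeasure_withDensity_ofReal hf.2
  rw [integral_eq_lintegral_of_nonneg_ae (ae_of_all _ hf0) hf.aestronglyMeasurable.restrict,
    ← withDensity_apply _ (measurableSet_ball.inter Measure.isClosed_support.measurableSet),
    measure_inter_conull Measure.measure_compl_support]
  exact ENNReal.toReal_pos
    ((Measure.mem_support_iff_forall _).mp hφ₀ _ (Metric.ball_mem_nhds _ hr)).ne'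
    (measure_ne_top _ _)

end

theorem statement12_general
    {V : Type*} [NormedAddCommGroup V] [InnerProductSpace ℝ V]
    [FiniteDimensional ℝ V] [MeasurableSpace V] [BorelSpace V]
    (Φ : Set V)
    (lam : Measure V) (f : V → ℝ) (hf0 : ∀ φ, 0 ≤ f φ)
    (hfint : Integrable f lam)
    (hΦsupp : Φ = {φ : V | ∀ U : Set V, IsOpen U → φ ∈ U →
      0 < (lam.withDensity fun ψ => ENNReal.ofReal (f ψ)) U})
    (hΦc : IsCompact Φ)
    {G : Type*}
    (ρ : G → V → V)
    (hρΦ : ∀ (g : G), ∀ φ ∈ Φ, ρ g φ ∈ Φ)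
    (hinner : ∀ (g : G) (φ₁ φ₂ : V), ⟪ρ g φ₁, ρ g φ₂⟫ = ⟪φ₁, φ₂⟫)
    (ΔG : G → G → ℝ)
    (hΔG : ∀ g₁ g₂, ΔG g₁ g₂ = ∫ φ in Φ, ‖ρ g₁ φ - ρ g₂ φ‖ * f φ ∂lam)
    :
    @Continuous (Φ × G) Φ
      (@instTopologicalSpaceProd Φ G _ (distTopology ΔG)) _
      (fun p : Φ × G => (⟨ρ p.2 (p.1 : V), hρΦ p.2 (p.1 : V) p.1.2⟩ : Φ)) := by
  let _ := distTopology ΔG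
  have hΦ : Φ = (lam.withDensity fun ψ => ENNReal.ofReal (f ψ)).support := by
    rw [hΦsupp, Measure.support_eq_forall_isOpen]
    exact Set.ext fun φ => forall_congr' fun U => imp.swap
  have hiso : ∀ g, Isometry (ρ g) := fun g => isometry_of_inner_map_map (hinner g)
  have hΔ : ∀ g₁ g₂, ΔG g₁ g₂ = ∫ φ in Φ, dist (ρ g₁ φ) (ρ g₂ φ) * f φ ∂lam := by
    simpa only [dist_eq_norm] using hΔG
  have hpos : ∀ φ ∈ Φ, ∀ r > 0, 0 < ∫ ψ in Metric.ball φ r ∩ Φ, f ψ ∂lam := by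
    rw [hΦ]
    exact fun φ hφ r => setIntegral_ball_inter_support_pos hf0 hfint hφ
  refine continuous_prod_of_continuous_lipschitzWith _ 1 (fun φ => ?_) (fun g => ?_)
  · exact (continuous_distTopology_apply hf0 hfint hΦc (fun g => (hiso g).lipschitz) hΔ
      (hpos φ φ.2)).subtype_mk _
  · exact (Isometry.of_dist_eq (f := fun φ : Φ => (⟨ρ g φ, hρΦ g φ φ.2⟩ : Φ))
      fun φ ψ => (hiso g).dist_eq φ ψ).lipschitz

theorem statement12
    {X : Type*} {V : Type*} [NormedAddCommGroup V] [InnerProductSpace ℝ V]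
    [FiniteDimensional ℝ V] [MeasurableSpace V] [BorelSpace V]
    (ev : V →ₗ[ℝ] (X → ℝ)) (hev : Function.Injective ev)
    (hbdd : ∀ φ : V, BddAbove (Set.range fun x => |ev φ x|))
    (α β : ℝ) (hα : 0 < α) (hβ : 0 < β)
    (hnorm₁ : ∀ φ : V, α * (⨆ x, |ev φ x|) ≤ ‖φ‖)
    (hnorm₂ : ∀ φ : V, ‖φ‖ ≤ β * (⨆ x, |ev φ x|))
    (Φ : Set V)
    (lam : Measure V) (f : V → ℝ) (hf0 : ∀ φ, 0 ≤ f φ)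
    (hfint : Integrable f lam) (hf1 : ∫ φ, f φ ∂lam = 1)
    (hΦsupp : Φ = {φ : V | ∀ U : Set V, IsOpen U → φ ∈ U →
      0 < (lam.withDensity fun ψ => ENNReal.ofReal (f ψ)) U})
    (hΦc : IsCompact Φ)
    {G : Type*} [Group G] (σ : G →* Equiv.Perm X) (hσ : Function.Injective σ)
    (ρ : G → V → V)
    (hρ : ∀ (g : G) (φ : V) (x : X), ev (ρ g φ) x = ev φ (σ g x))
    (hρΦ : ∀ (g : G), ∀ φ ∈ Φ, ρ g φ ∈ Φ)
    (hinner : ∀ (g : G) (φ₁ φ₂ : V), ⟪ρ g φ₁, ρ g φ₂⟫ = ⟪φ₁, φ₂⟫)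
    (hfinv : ∀ (g : G) (φ : V), f (ρ g φ) = f φ)
    (hlaminv : ∀ (g : G) (A : Set V), MeasurableSet A → lam (ρ g '' A) = lam A)
    (ΔG DG : G → G → ℝ)
    (hΔG : ∀ g₁ g₂, ΔG g₁ g₂ = ∫ φ in Φ, ‖ρ g₁ φ - ρ g₂ φ‖ * f φ ∂lam)
    (hDG : ∀ g₁ g₂, DG g₁ g₂ =
      ⨆ φ : Φ, ⨆ x, |ev (ρ g₁ (φ : V)) x - ev (ρ g₂ (φ : V)) x|)
    :
    @Continuous (Φ × G) Φ
      (@instTopologicalSpaceProd Φ G _ (distTopology ΔG)) _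
      (fun p : Φ × G => (⟨ρ p.2 (p.1 : V), hρΦ p.2 (p.1 : V) p.1.2⟩ : Φ)) :=
  statement12_general Φ lam f hf0 hfint hΦsupp hΦc ρ hρΦ hinner ΔG hΔG
end
end

section
/- The pseudo-metric space (G, D_G) is totally bounded, and consequently the pseudo-metric space (G, Δ_G) is totally bounded as well. -/
open MeasureTheory Filter Topology RealInnerProductSpace

noncomputable section

theorem statement13
    {X : Type*} {V : Type*} [NormedAddCommGroup V] [InnerProductSpace ℝ V]
    [FiniteDimensional ℝ V] [MeasurableSpace V] [BorelSpace V]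
    (ev : V →ₗ[ℝ] (X → ℝ)) (hev : Function.Injective ev)
    (hbdd : ∀ φ : V, BddAbove (Set.range fun x => |ev φ x|))
    (α β : ℝ) (hα : 0 < α) (hβ : 0 < β)
    (hnorm₁ : ∀ φ : V, α * (⨆ x, |ev φ x|) ≤ ‖φ‖)
    (hnorm₂ : ∀ φ : V, ‖φ‖ ≤ β * (⨆ x, |ev φ x|))
    (Φ : Set V)
    (lam : Measure V) (f : V → ℝ) (hf0 : ∀ φ, 0 ≤ f φ)
    (hfint : Integrable f lam) (hf1 : ∫ φ, f φ ∂lam = 1)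
    (hΦsupp : Φ = {φ : V | ∀ U : Set V, IsOpen U → φ ∈ U →
      0 < (lam.withDensity fun ψ => ENNReal.ofReal (f ψ)) U})
    (hΦc : IsCompact Φ)
    {G : Type*} [Group G] (σ : G →* Equiv.Perm X) (hσ : Function.Injective σ)
    (ρ : G → V → V)
    (hρ : ∀ (g : G) (φ : V) (x : X), ev (ρ g φ) x = ev φ (σ g x))
    (hρΦ : ∀ (g : G), ∀ φ ∈ Φ, ρ g φ ∈ Φ)
    (hinner : ∀ (g : G) (φ₁ φ₂ : V), ⟪ρ g φ₁, ρ g φ₂⟫ = ⟪φ₁, φ₂⟫)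
    (hfinv : ∀ (g : G) (φ : V), f (ρ g φ) = f φ)
    (hlaminv : ∀ (g : G) (A : Set V), MeasurableSet A → lam (ρ g '' A) = lam A)
    (ΔG DG : G → G → ℝ)
    (hΔG : ∀ g₁ g₂, ΔG g₁ g₂ = ∫ φ in Φ, ‖ρ g₁ φ - ρ g₂ φ‖ * f φ ∂lam)
    (hDG : ∀ g₁ g₂, DG g₁ g₂ =
      ⨆ φ : Φ, ⨆ x, |ev (ρ g₁ (φ : V)) x - ev (ρ g₂ (φ : V)) x|)
    :
    (∀ ε > (0 : ℝ), ∃ S : Set G, S.Finite ∧ ∀ g : G, ∃ g' ∈ S, DG g g' < ε) ∧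
    (∀ ε > (0 : ℝ), ∃ S : Set G, S.Finite ∧ ∀ g : G, ∃ g' ∈ S, ΔG g g' < ε) := by
  classical
  -- each ρ g preserves distances
  have hiso : ∀ (g : G) (a b : V), ‖ρ g a - ρ g b‖ = ‖a - b‖ := by
    intro g a b
    have h1 : ‖ρ g a - ρ g b‖ ^ 2 = ‖a - b‖ ^ 2 := by
      rw [norm_sub_sq_real, norm_sub_sq_real, ← real_inner_self_eq_norm_sq,
        ← real_inner_self_eq_norm_sq, ← real_inner_self_eq_norm_sq,
        ← real_inner_self_eq_norm_sq, hinner, hinner, hinner]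
    rw [← Real.sqrt_sq (norm_nonneg (ρ g a - ρ g b)), h1,
      Real.sqrt_sq (norm_nonneg (a - b))]
  -- the core total-boundedness statement
  have core : ∀ ε > (0 : ℝ), ∃ S : Set G, S.Finite ∧
      ∀ g : G, ∃ g' ∈ S, ∀ φ ∈ Φ, ‖ρ g φ - ρ g' φ‖ < ε := by
    intro ε hε
    have hδ : 0 < ε / 3 := by linarith
    obtain ⟨t, htΦ, htfin, htcov⟩ :=
      totallyBounded_iff_subset.1 hΦc.totallyBounded _ (Metric.dist_mem_uniformity hδ)
    haveI : Fintype t := htfin.fintype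
    set F : G → (t → V) := fun g i => ρ g (i : V) with hF
    have hAK : Set.range F ⊆ Set.pi Set.univ (fun _ : t => Φ) := by
      rintro _ ⟨g, rfl⟩ i _
      exact hρΦ g _ (htΦ i.2)
    have hK : IsCompact (Set.pi Set.univ (fun _ : t => Φ)) :=
      isCompact_univ_pi fun _ => hΦc
    have hA : TotallyBounded (Set.range F) := hK.totallyBounded.subset hAK
    obtain ⟨T, hTA, hTfin, hTcov⟩ :=
      totallyBounded_iff_subset.1 hA _ (Metric.dist_mem_uniformity hδ)
    set c : (t → V) → G := fun y => if h : ∃ g, F g = y then h.choose else 1 with hc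
    refine ⟨c '' T, hTfin.image c, fun g => ?_⟩
    obtain ⟨y, hyT, hy⟩ := Set.mem_iUnion₂.1 (hTcov (Set.mem_range_self g))
    have hyr : ∃ g', F g' = y := hTA hyT
    refine ⟨c y, Set.mem_image_of_mem c hyT, ?_⟩
    have hcy : F (c y) = y := by
      rw [hc]; simp only [dif_pos hyr]; exact hyr.choose_spec
    intro φ hφ
    obtain ⟨z, hzt, hz⟩ := Set.mem_iUnion₂.1 (htcov hφ)
    have hz' : dist φ z < ε / 3 := hz
    have h1 : ‖ρ g φ - ρ g z‖ < ε / 3 := by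
      rw [hiso, ← dist_eq_norm]; exact hz'
    have hyd : dist (F g) (F (c y)) < ε / 3 := by rw [hcy]; exact hy
    have h2 : ‖ρ g z - ρ (c y) z‖ < ε / 3 := by
      have := (dist_pi_lt_iff hδ).1 hyd ⟨z, hzt⟩
      rw [dist_eq_norm] at this
      exact this
    have h3 : ‖ρ (c y) z - ρ (c y) φ‖ < ε / 3 := by
      rw [hiso, ← dist_eq_norm, dist_comm]; exact hz'
    have hsplit : ρ g φ - ρ (c y) φ =
        (ρ g φ - ρ g z) + (ρ g z - ρ (c y) z) + (ρ (c y) z - ρ (c y) φ) := by abel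
    calc ‖ρ g φ - ρ (c y) φ‖
        ≤ ‖ρ g φ - ρ g z‖ + ‖ρ g z - ρ (c y) z‖ + ‖ρ (c y) z - ρ (c y) φ‖ := by
          rw [hsplit]; exact norm_add₃_le
      _ < ε := by linarith
  constructor
  · -- total boundedness for D_G
    intro ε hε
    obtain ⟨S, hSfin, hS⟩ := core (α * ε / 2) (by positivity)
    refine ⟨S, hSfin, fun g => ?_⟩
    obtain ⟨g', hg'S, hg'⟩ := hS g
    refine ⟨g', hg'S, ?_⟩
    rw [hDG]
    have hhalf : (0:ℝ) ≤ ε / 2 := by linarith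
    have key : ∀ φ : Φ, (⨆ x, |ev (ρ g (φ : V)) x - ev (ρ g' (φ : V)) x|) ≤ ε / 2 := by
      intro φ
      have hψ : ‖ρ g (φ : V) - ρ g' (φ : V)‖ < α * ε / 2 := hg' φ φ.2
      have hb : (⨆ x, |ev (ρ g (φ : V)) x - ev (ρ g' (φ : V)) x|)
          = ⨆ x, |ev (ρ g (φ : V) - ρ g' (φ : V)) x| := by
        congr 1; funext x; rw [map_sub]; rfl
      rw [hb]
      have h1 := hnorm₁ (ρ g (φ : V) - ρ g' (φ : V))
      have h2 : α * (⨆ x, |ev (ρ g (φ : V) - ρ g' (φ : V)) x|) < α * (ε / 2) := by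
        calc α * (⨆ x, |ev (ρ g (φ : V) - ρ g' (φ : V)) x|)
            ≤ ‖ρ g (φ : V) - ρ g' (φ : V)‖ := h1
          _ < α * ε / 2 := hψ
          _ = α * (ε / 2) := by ring
      exact le_of_lt ((mul_lt_mul_iff_right₀ hα).1 h2)
    exact lt_of_le_of_lt (Real.iSup_le key hhalf) (by linarith)
  · -- total boundedness for Δ_G
    intro ε hε
    obtain ⟨S, hSfin, hS⟩ := core (ε / 2) (by linarith)
    refine ⟨S, hSfin, fun g => ?_⟩
    obtain ⟨g', hg'S, hg'⟩ := hS g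
    refine ⟨g', hg'S, ?_⟩
    rw [hΔG]
    have hΦm : MeasurableSet Φ := hΦc.isClosed.measurableSet
    have hint : Integrable (fun φ => ε / 2 * f φ) (lam.restrict Φ) :=
      (hfint.restrict).const_mul _
    have hle : ∫ φ in Φ, ‖ρ g φ - ρ g' φ‖ * f φ ∂lam ≤ ∫ φ in Φ, ε / 2 * f φ ∂lam := by
      apply integral_mono_of_nonneg
      · exact ae_of_all _ fun φ => mul_nonneg (norm_nonneg _) (hf0 φ)
      · exact hint
      · refine (ae_restrict_iff' hΦm).2 (ae_of_all _ fun φ hφ => ?_)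
        exact mul_le_mul_of_nonneg_right (hg' φ hφ).le (hf0 φ)
    have h2 : ∫ φ in Φ, ε / 2 * f φ ∂lam = ε / 2 * ∫ φ in Φ, f φ ∂lam :=
      integral_const_mul _ _
    have h3 : ∫ φ in Φ, f φ ∂lam ≤ 1 := by
      rw [← hf1]; exact setIntegral_le_integral hfint (ae_of_all _ hf0)
    have h4 : (0:ℝ) ≤ ε / 2 := by linarith
    calc ∫ φ in Φ, ‖ρ g φ - ρ g' φ‖ * f φ ∂lam
        ≤ ε / 2 * ∫ φ in Φ, f φ ∂lam := by rw [← h2]; exact hle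
      _ ≤ ε / 2 * 1 := mul_le_mul_of_nonneg_left h3 h4
      _ < ε := by linarith
end
end

section
/- If the pseudo-metric space (G, Δ_G) is complete, then it is compact; likewise, if (G, D_G) is complete, then it is compact. -/
open MeasureTheory Filter Topology RealInnerProductSpace

noncomputable section

private lemma distTopology_eq_metric {G : Type*} (m : PseudoMetricSpace G) :
    distTopology (@dist G m.toDist) = m.toUniformSpace.toTopologicalSpace := by
  letI := m
  refine le_antisymm ?_ (le_generateFrom ?_)
  · rw [TopologicalSpace.le_def]
    intro U hU
    rw [Metric.isOpen_iff] at hU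
    choose ε hε hball using hU
    have hUeq : U = ⋃ x : U, Metric.ball (x : G) (ε x x.2) := by
      ext y
      simp only [Set.mem_iUnion]
      constructor
      · intro hy; exact ⟨⟨y, hy⟩, Metric.mem_ball_self (hε y hy)⟩
      · rintro ⟨x, hx⟩; exact hball x x.2 hx
    rw [hUeq, ← Set.sUnion_range]
    refine TopologicalSpace.GenerateOpen.sUnion _ ?_
    rintro s ⟨x, rfl⟩
    refine TopologicalSpace.GenerateOpen.basic _ ⟨(x : G), ε x x.2, ?_⟩
    ext y
    simp [Metric.ball, dist_comm]
  · rintro s ⟨x, r, rfl⟩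
    have hs : {y | dist x y < r} = Metric.ball x r := by
      ext y; simp [Metric.ball, dist_comm]
    rw [hs]; exact Metric.isOpen_ball

private lemma compact_of_d {G : Type*} (d : G → G → ℝ)
    (hrefl : ∀ g, d g g = 0)
    (hsymm : ∀ g₁ g₂, d g₁ g₂ = d g₂ g₁)
    (htri : ∀ g₁ g₂ g₃, d g₁ g₃ ≤ d g₁ g₂ + d g₂ g₃)
    (htb : ∀ ε > (0 : ℝ), ∃ t : Set G, t.Finite ∧ ∀ g, ∃ h ∈ t, d h g < ε)
    (hcomp : ∀ u : ℕ → G,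
        (∀ ε > (0 : ℝ), ∃ N : ℕ, ∀ m ≥ N, ∀ n ≥ N, d (u m) (u n) < ε) →
        ∃ g : G, ∀ ε > (0 : ℝ), ∃ N : ℕ, ∀ n ≥ N, d (u n) g < ε) :
    @CompactSpace G (distTopology d) := by
  letI m : PseudoMetricSpace G :=
    { dist := d
      dist_self := hrefl
      dist_comm := hsymm
      dist_triangle := htri }
  have htop : distTopology d = m.toUniformSpace.toTopologicalSpace :=
    distTopology_eq_metric m
  rw [htop]
  haveI : CompleteSpace G := by
    apply Metric.complete_of_cauchySeq_tendsto
    intro u hu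
    rw [Metric.cauchySeq_iff] at hu
    obtain ⟨g, hg⟩ := hcomp u hu
    exact ⟨g, Metric.tendsto_atTop.2 hg⟩
  have huniv : TotallyBounded (Set.univ : Set G) := by
    rw [Metric.totallyBounded_iff]
    intro ε hε
    obtain ⟨t, htf, hnet⟩ := htb ε hε
    refine ⟨t, htf, fun g _ => ?_⟩
    obtain ⟨h, hht, hlt⟩ := hnet g
    have hgh : dist g h < ε := by rw [dist_comm]; exact hlt
    exact Set.mem_biUnion hht (Metric.mem_ball.2 hgh)
  have hcompact : IsCompact (Set.univ : Set G) :=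
    isCompact_iff_totallyBounded_isComplete.2
      ⟨huniv, completeSpace_iff_isComplete_univ.1 ‹_›⟩
  exact ⟨hcompact⟩

theorem statement14
    {X : Type*} {V : Type*} [NormedAddCommGroup V] [InnerProductSpace ℝ V]
    [FiniteDimensional ℝ V] [MeasurableSpace V] [BorelSpace V]
    (ev : V →ₗ[ℝ] (X → ℝ)) (hev : Function.Injective ev)
    (hbdd : ∀ φ : V, BddAbove (Set.range fun x => |ev φ x|))
    (α β : ℝ) (hα : 0 < α) (hβ : 0 < β)
    (hnorm₁ : ∀ φ : V, α * (⨆ x, |ev φ x|) ≤ ‖φ‖)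
    (hnorm₂ : ∀ φ : V, ‖φ‖ ≤ β * (⨆ x, |ev φ x|))
    (Φ : Set V)
    (lam : Measure V) (f : V → ℝ) (hf0 : ∀ φ, 0 ≤ f φ)
    (hfint : Integrable f lam) (hf1 : ∫ φ, f φ ∂lam = 1)
    (hΦsupp : Φ = {φ : V | ∀ U : Set V, IsOpen U → φ ∈ U →
      0 < (lam.withDensity fun ψ => ENNReal.ofReal (f ψ)) U})
    (hΦc : IsCompact Φ)
    {G : Type*} [Group G] (σ : G →* Equiv.Perm X) (hσ : Function.Injective σ)
    (ρ : G → V → V)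
    (hρ : ∀ (g : G) (φ : V) (x : X), ev (ρ g φ) x = ev φ (σ g x))
    (hρΦ : ∀ (g : G), ∀ φ ∈ Φ, ρ g φ ∈ Φ)
    (hinner : ∀ (g : G) (φ₁ φ₂ : V), ⟪ρ g φ₁, ρ g φ₂⟫ = ⟪φ₁, φ₂⟫)
    (hfinv : ∀ (g : G) (φ : V), f (ρ g φ) = f φ)
    (hlaminv : ∀ (g : G) (A : Set V), MeasurableSet A → lam (ρ g '' A) = lam A)
    (ΔG DG : G → G → ℝ)
    (hΔG : ∀ g₁ g₂, ΔG g₁ g₂ = ∫ φ in Φ, ‖ρ g₁ φ - ρ g₂ φ‖ * f φ ∂lam)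
    (hDG : ∀ g₁ g₂, DG g₁ g₂ =
      ⨆ φ : Φ, ⨆ x, |ev (ρ g₁ (φ : V)) x - ev (ρ g₂ (φ : V)) x|)
    :
    ((∀ u : ℕ → G,
        (∀ ε > (0 : ℝ), ∃ N : ℕ, ∀ m ≥ N, ∀ n ≥ N, ΔG (u m) (u n) < ε) →
        ∃ g : G, ∀ ε > (0 : ℝ), ∃ N : ℕ, ∀ n ≥ N, ΔG (u n) g < ε) →
      @CompactSpace G (distTopology ΔG)) ∧
    ((∀ u : ℕ → G,
        (∀ ε > (0 : ℝ), ∃ N : ℕ, ∀ m ≥ N, ∀ n ≥ N, DG (u m) (u n) < ε) →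
        ∃ g : G, ∀ ε > (0 : ℝ), ∃ N : ℕ, ∀ n ≥ N, DG (u n) g < ε) →
      @CompactSpace G (distTopology DG)) := by
  classical
  -- each ρ g is an isometry of V
  have hiso : ∀ (g : G) (φ₁ φ₂ : V), ‖ρ g φ₁ - ρ g φ₂‖ = ‖φ₁ - φ₂‖ := by
    intro g φ₁ φ₂
    have h1 : ‖ρ g φ₁ - ρ g φ₂‖ ^ 2 = ‖φ₁ - φ₂‖ ^ 2 := by
      rw [norm_sub_sq_real, norm_sub_sq_real, hinner,
        ← real_inner_self_eq_norm_sq (ρ g φ₁), ← real_inner_self_eq_norm_sq (ρ g φ₂),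
        hinner, hinner, real_inner_self_eq_norm_sq, real_inner_self_eq_norm_sq]
    nlinarith [norm_nonneg (ρ g φ₁ - ρ g φ₂), norm_nonneg (φ₁ - φ₂)]
  have hisoD : ∀ (g : G) (a b : V), dist (ρ g a) (ρ g b) = dist a b := by
    intro g a b; rw [dist_eq_norm, dist_eq_norm, hiso]
  have hcont : ∀ g : G, Continuous (ρ g) :=
    fun g => (Isometry.of_dist_eq (hisoD g)).continuous
  -- a bound on Φ
  obtain ⟨R, hR⟩ : ∃ R, ∀ φ ∈ Φ, ‖φ‖ ≤ R := by
    obtain ⟨r, hr⟩ := hΦc.isBounded.subset_closedBall 0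
    exact ⟨r, fun φ hφ => by simpa using hr hφ⟩
  have hdiff2R : ∀ (g₁ g₂ : G) (φ : V), φ ∈ Φ → ‖ρ g₁ φ - ρ g₂ φ‖ ≤ 2 * R := by
    intro g₁ g₂ φ hφ
    have h1 := norm_sub_le (ρ g₁ φ) (ρ g₂ φ)
    have h2 := hR _ (hρΦ g₁ φ hφ)
    have h3 := hR _ (hρΦ g₂ φ hφ)
    linarith
  have hmeasΦ : MeasurableSet Φ := hΦc.isClosed.measurableSet
  -- integrability of the ΔG integrands
  have hint : ∀ g₁ g₂ : G,
      Integrable (fun φ => ‖ρ g₁ φ - ρ g₂ φ‖ * f φ) (lam.restrict Φ) := by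
    intro g₁ g₂
    refine Integrable.mono' ((hfint.restrict (s := Φ)).const_mul (2 * R)) ?_ ?_
    · exact (((hcont g₁).sub (hcont g₂)).norm.aestronglyMeasurable).mul
        (hfint.restrict (s := Φ)).aestronglyMeasurable
    · refine (ae_restrict_iff' hmeasΦ).2 (ae_of_all _ fun φ hφ => ?_)
      have h1 : ‖ρ g₁ φ - ρ g₂ φ‖ ≤ 2 * R := hdiff2R g₁ g₂ φ hφ
      have h2 : 0 ≤ f φ := hf0 φ
      rw [Real.norm_eq_abs, abs_of_nonneg (mul_nonneg (norm_nonneg _) h2)]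
      exact mul_le_mul_of_nonneg_right h1 h2
  -- ΔG is a pseudo-distance
  have hΔrefl : ∀ g, ΔG g g = 0 := by intro g; simp [hΔG]
  have hΔsymm : ∀ g₁ g₂, ΔG g₁ g₂ = ΔG g₂ g₁ := by
    intro g₁ g₂
    rw [hΔG, hΔG]
    exact congrArg (integral _) (funext fun φ => by rw [norm_sub_rev])
  have hΔtri : ∀ g₁ g₂ g₃, ΔG g₁ g₃ ≤ ΔG g₁ g₂ + ΔG g₂ g₃ := by
    intro g₁ g₂ g₃
    rw [hΔG, hΔG, hΔG, ← integral_add (hint g₁ g₂) (hint g₂ g₃)]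
    refine integral_mono (hint g₁ g₃) ((hint g₁ g₂).add (hint g₂ g₃)) fun φ => ?_
    have h1 : ‖ρ g₁ φ - ρ g₃ φ‖ ≤ ‖ρ g₁ φ - ρ g₂ φ‖ + ‖ρ g₂ φ - ρ g₃ φ‖ := by
      have := dist_triangle (ρ g₁ φ) (ρ g₂ φ) (ρ g₃ φ)
      simpa [dist_eq_norm] using this
    have h2 : 0 ≤ f φ := hf0 φ
    calc ‖ρ g₁ φ - ρ g₃ φ‖ * f φ
        ≤ (‖ρ g₁ φ - ρ g₂ φ‖ + ‖ρ g₂ φ - ρ g₃ φ‖) * f φ :=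
          mul_le_mul_of_nonneg_right h1 h2
      _ = ‖ρ g₁ φ - ρ g₂ φ‖ * f φ + ‖ρ g₂ φ - ρ g₃ φ‖ * f φ := by ring
  -- the sup-norm function and its properties
  have hS_nonneg : ∀ ψ : V, (0 : ℝ) ≤ ⨆ x, |ev ψ x| :=
    fun ψ => Real.iSup_nonneg fun x => abs_nonneg _
  have hS_le : ∀ ψ : V, (⨆ x, |ev ψ x|) ≤ ‖ψ‖ / α := by
    intro ψ
    rw [le_div_iff₀ hα, mul_comm]
    exact hnorm₁ ψ
  have hS_add : ∀ ψ₁ ψ₂ : V,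
      (⨆ x, |ev (ψ₁ + ψ₂) x|) ≤ (⨆ x, |ev ψ₁ x|) + ⨆ x, |ev ψ₂ x| := by
    intro ψ₁ ψ₂
    rcases isEmpty_or_nonempty X with hX | hX
    · rw [Real.iSup_of_isEmpty]
      exact add_nonneg (hS_nonneg ψ₁) (hS_nonneg ψ₂)
    · refine ciSup_le fun x => ?_
      have h1 : |ev (ψ₁ + ψ₂) x| ≤ |ev ψ₁ x| + |ev ψ₂ x| := by
        simp only [map_add, Pi.add_apply]
        exact abs_add_le _ _
      exact h1.trans (add_le_add (le_ciSup (hbdd ψ₁) x) (le_ciSup (hbdd ψ₂) x))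
  -- DG rewritten
  have hDG' : ∀ g₁ g₂, DG g₁ g₂ = ⨆ φ : Φ, ⨆ x, |ev (ρ g₁ (φ : V) - ρ g₂ (φ : V)) x| := by
    intro g₁ g₂
    rw [hDG]
    simp only [map_sub, Pi.sub_apply]
  have hBdd : ∀ g₁ g₂ : G,
      BddAbove (Set.range fun φ : Φ => ⨆ x, |ev (ρ g₁ (φ : V) - ρ g₂ (φ : V)) x|) := by
    intro g₁ g₂
    refine ⟨2 * R / α, ?_⟩
    rintro _ ⟨φ, rfl⟩
    refine (hS_le _).trans ?_
    have h1 : ‖ρ g₁ (φ : V) - ρ g₂ (φ : V)‖ ≤ 2 * R := hdiff2R g₁ g₂ _ φ.2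
    gcongr
  -- DG is a pseudo-distance
  have hDrefl : ∀ g, DG g g = 0 := by
    intro g
    rw [hDG' g g]
    have h0 : ∀ φ : Φ, (⨆ x, |ev (ρ g (φ : V) - ρ g (φ : V)) x|) = 0 := by
      intro φ
      simp only [sub_self, map_zero, Pi.zero_apply, abs_zero]
      rcases isEmpty_or_nonempty X with hX | hX
      · exact Real.iSup_of_isEmpty _
      · exact ciSup_const
    simp only [h0]
    rcases isEmpty_or_nonempty (↥Φ) with hΦ | hΦ
    · exact Real.iSup_of_isEmpty _
    · exact ciSup_const
  have hDsymm : ∀ g₁ g₂, DG g₁ g₂ = DG g₂ g₁ := by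
    intro g₁ g₂
    rw [hDG, hDG]
    congr 1
    funext φ
    congr 1
    funext x
    exact abs_sub_comm _ _
  have hDtri : ∀ g₁ g₂ g₃, DG g₁ g₃ ≤ DG g₁ g₂ + DG g₂ g₃ := by
    intro g₁ g₂ g₃
    rw [hDG' g₁ g₃, hDG' g₁ g₂, hDG' g₂ g₃]
    rcases isEmpty_or_nonempty (↥Φ) with hΦ | hΦ
    · rw [Real.iSup_of_isEmpty, Real.iSup_of_isEmpty, Real.iSup_of_isEmpty]
      norm_num
    · refine ciSup_le fun φ => ?_
      have hsplit : ρ g₁ (φ : V) - ρ g₃ (φ : V) =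
          (ρ g₁ (φ : V) - ρ g₂ (φ : V)) + (ρ g₂ (φ : V) - ρ g₃ (φ : V)) := by abel
      have h1 : (⨆ x, |ev (ρ g₁ (φ : V) - ρ g₃ (φ : V)) x|) ≤
          (⨆ x, |ev (ρ g₁ (φ : V) - ρ g₂ (φ : V)) x|) +
          ⨆ x, |ev (ρ g₂ (φ : V) - ρ g₃ (φ : V)) x| := by
        rw [hsplit]; exact hS_add _ _
      exact h1.trans (add_le_add (le_ciSup (hBdd g₁ g₂) φ) (le_ciSup (hBdd g₂ g₃) φ))
  -- the finite-net construction
  have hNET : ∀ δ > (0 : ℝ), ∃ t : Set G, t.Finite ∧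
      ∀ g : G, ∃ h ∈ t, ∀ φ ∈ Φ, ‖ρ g φ - ρ h φ‖ ≤ 4 * δ := by
    intro δ hδ
    obtain ⟨P, hPΦ, hPfin, hPnet⟩ : ∃ P : Set V, P ⊆ Φ ∧ P.Finite ∧
        ∀ φ ∈ Φ, ∃ p ∈ P, dist φ p < δ := by
      have htb := hΦc.totallyBounded
      rw [totallyBounded_iff_subset] at htb
      obtain ⟨P, hPΦ, hPfin, hcover⟩ := htb _ (Metric.dist_mem_uniformity hδ)
      refine ⟨P, hPΦ, hPfin, fun φ hφ => ?_⟩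
      obtain ⟨p, hpP, hpφ⟩ := Set.mem_iUnion₂.1 (hcover hφ)
      exact ⟨p, hpP, hpφ⟩
    haveI : Finite (↥P) := hPfin.to_subtype
    choose c hcP hcδ using fun (g : G) (p : ↥P) =>
      hPnet (ρ g (p : V)) (hρΦ g (p : V) (hPΦ p.2))
    set c' : G → (↥P → ↥P) := fun g p => ⟨c g p, hcP g p⟩ with hc'def
    haveI : Finite (↥P → ↥P) := Pi.finite
    have hrangefin : (Set.range c').Finite :=
      Set.Finite.subset Set.finite_univ (Set.subset_univ _)
    haveI : Finite (↥(Set.range c')) := hrangefin.to_subtype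
    refine ⟨Set.range (fun q : Set.range c' => q.2.choose), Set.finite_range _, fun g => ?_⟩
    set q : Set.range c' := ⟨c' g, ⟨g, rfl⟩⟩ with hq
    set h : G := q.2.choose with hh
    have hch : c' h = c' g := q.2.choose_spec
    refine ⟨h, ⟨q, rfl⟩, fun φ hφ => ?_⟩
    obtain ⟨p, hpP, hpφ⟩ := hPnet φ hφ
    set p' : ↥P := ⟨p, hpP⟩ with hp'
    have e1 : dist (ρ g p) (c g p') < δ := hcδ g p'
    have e2 : dist (c h p') (ρ h p) < δ := by rw [dist_comm]; exact hcδ h p'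
    have e3 : c h p' = c g p' := by
      have := congrFun hch p'
      exact Subtype.ext_iff.1 this
    have e4 : dist (ρ g φ) (ρ g p) < δ := by rw [hisoD]; exact hpφ
    have e5 : dist (ρ h p) (ρ h φ) < δ := by
      rw [hisoD, dist_comm]; exact hpφ
    have e6 : dist (ρ g p) (ρ h p) < 2 * δ := by
      have e1' : dist (ρ g p) (c h p') < δ := by rw [e3]; exact e1
      have htr := dist_triangle (ρ g p) (c h p') (ρ h p)
      linarith
    have e7 := dist_triangle4 (ρ g φ) (ρ g p) (ρ h p) (ρ h φ)
    rw [← dist_eq_norm]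
    linarith
  -- conclude
  constructor
  · intro hcomp
    refine compact_of_d ΔG hΔrefl hΔsymm hΔtri ?_ hcomp
    intro ε hε
    obtain ⟨t, htf, hnet⟩ := hNET (ε / 5) (by linarith)
    refine ⟨t, htf, fun g => ?_⟩
    obtain ⟨h, hht, hb⟩ := hnet g
    refine ⟨h, hht, ?_⟩
    rw [hΔG]
    have hfr : Integrable f (lam.restrict Φ) := hfint.restrict (s := Φ)
    calc ∫ φ in Φ, ‖ρ h φ - ρ g φ‖ * f φ ∂lam
        ≤ ∫ φ in Φ, (4 * (ε / 5)) * f φ ∂lam := by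
          refine setIntegral_mono_on (hint h g) (hfr.const_mul _) hmeasΦ fun φ hφ => ?_
          refine mul_le_mul_of_nonneg_right ?_ (hf0 φ)
          rw [norm_sub_rev]
          exact hb φ hφ
      _ = (4 * (ε / 5)) * ∫ φ in Φ, f φ ∂lam := integral_const_mul _ _
      _ ≤ (4 * (ε / 5)) * 1 := by
          refine mul_le_mul_of_nonneg_left ?_ (by linarith)
          rw [← hf1]
          exact setIntegral_le_integral hfint (ae_of_all _ hf0)
      _ < ε := by linarith
  · intro hcomp
    refine compact_of_d DG hDrefl hDsymm hDtri ?_ hcomp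
    intro ε hε
    obtain ⟨t, htf, hnet⟩ := hNET (ε * α / 5) (by positivity)
    refine ⟨t, htf, fun g => ?_⟩
    obtain ⟨h, hht, hb⟩ := hnet g
    refine ⟨h, hht, ?_⟩
    have hle : DG h g ≤ 4 * ε / 5 := by
      rw [hDG' h g]
      rcases isEmpty_or_nonempty (↥Φ) with hΦ | hΦ
      · rw [Real.iSup_of_isEmpty]; positivity
      · refine ciSup_le fun φ => ?_
        refine (hS_le _).trans ?_
        have h1 : ‖ρ h (φ : V) - ρ g (φ : V)‖ ≤ 4 * (ε * α / 5) := by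
          rw [norm_sub_rev]
          exact hb (φ : V) φ.2
        have h2 : ‖ρ h (φ : V) - ρ g (φ : V)‖ / α ≤ (4 * (ε * α / 5)) / α := by gcongr
        refine h2.trans ?_
        rw [div_le_iff₀ hα]
        ring_nf
        nlinarith
    linarith
end
end

section
/- For every ε > 0, the space 𝓕^all of all GENEOs from ((Φ₁,‖·‖_{V₁}),G₁) to ((Φ₂,‖·‖_{V₂}),G₂) admits a finite subset 𝓕 such that for every F ∈ 𝓕^all there exists F' ∈ 𝓕 with |||F − F'|||_{L²} < ε. -/
open MeasureTheory Filter Topology RealInnerProductSpace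

noncomputable section

theorem statement19
    {X₁ X₂ : Type*} {V₁ V₂ : Type*}
    [NormedAddCommGroup V₁] [InnerProductSpace ℝ V₁] [FiniteDimensional ℝ V₁]
    [MeasurableSpace V₁] [BorelSpace V₁]
    [NormedAddCommGroup V₂] [InnerProductSpace ℝ V₂] [FiniteDimensional ℝ V₂]
    [MeasurableSpace V₂] [BorelSpace V₂]
    (ev₁ : V₁ →ₗ[ℝ] (X₁ → ℝ)) (hev₁ : Function.Injective ev₁)
    (ev₂ : V₂ →ₗ[ℝ] (X₂ → ℝ)) (hev₂ : Function.Injective ev₂)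
    (hbdd₁ : ∀ φ : V₁, BddAbove (Set.range fun x => |ev₁ φ x|))
    (hbdd₂ : ∀ φ : V₂, BddAbove (Set.range fun x => |ev₂ φ x|))
    (α₁ β₁ α₂ β₂ : ℝ) (hα₁ : 0 < α₁) (hβ₁ : 0 < β₁) (hα₂ : 0 < α₂) (hβ₂ : 0 < β₂)
    (hnorm₁₁ : ∀ φ : V₁, α₁ * (⨆ x, |ev₁ φ x|) ≤ ‖φ‖)
    (hnorm₁₂ : ∀ φ : V₁, ‖φ‖ ≤ β₁ * (⨆ x, |ev₁ φ x|))
    (hnorm₂₁ : ∀ φ : V₂, α₂ * (⨆ x, |ev₂ φ x|) ≤ ‖φ‖)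
    (hnorm₂₂ : ∀ φ : V₂, ‖φ‖ ≤ β₂ * (⨆ x, |ev₂ φ x|))
    (Φ₁ : Set V₁) (Φ₂ : Set V₂)
    (lam₁ : Measure V₁) (f₁ : V₁ → ℝ) (hf₁0 : ∀ φ, 0 ≤ f₁ φ)
    (hf₁int : Integrable f₁ lam₁) (hf₁1 : ∫ φ, f₁ φ ∂lam₁ = 1)
    (lam₂ : Measure V₂) (f₂ : V₂ → ℝ) (hf₂0 : ∀ φ, 0 ≤ f₂ φ)
    (hf₂int : Integrable f₂ lam₂) (hf₂1 : ∫ φ, f₂ φ ∂lam₂ = 1)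
    (hΦ₁supp : Φ₁ = {φ : V₁ | ∀ U : Set V₁, IsOpen U → φ ∈ U →
      0 < (lam₁.withDensity fun ψ => ENNReal.ofReal (f₁ ψ)) U})
    (hΦ₁c : IsCompact Φ₁)
    (hΦ₂supp : Φ₂ = {φ : V₂ | ∀ U : Set V₂, IsOpen U → φ ∈ U →
      0 < (lam₂.withDensity fun ψ => ENNReal.ofReal (f₂ ψ)) U})
    (hΦ₂c : IsCompact Φ₂)
    {G₁ G₂ : Type*} [Group G₁] [Group G₂]
    (σ₁ : G₁ →* Equiv.Perm X₁) (hσ₁ : Function.Injective σ₁)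
    (σ₂ : G₂ →* Equiv.Perm X₂) (hσ₂ : Function.Injective σ₂)
    (ρ₁ : G₁ → V₁ → V₁)
    (hρ₁ : ∀ (g : G₁) (φ : V₁) (x : X₁), ev₁ (ρ₁ g φ) x = ev₁ φ (σ₁ g x))
    (ρ₂ : G₂ → V₂ → V₂)
    (hρ₂ : ∀ (g : G₂) (φ : V₂) (x : X₂), ev₂ (ρ₂ g φ) x = ev₂ φ (σ₂ g x))
    (hρΦ₁ : ∀ (g : G₁), ∀ φ ∈ Φ₁, ρ₁ g φ ∈ Φ₁)
    (hρΦ₂ : ∀ (g : G₂), ∀ φ ∈ Φ₂, ρ₂ g φ ∈ Φ₂)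
    (hinner₁ : ∀ (g : G₁) (φ φ' : V₁), ⟪ρ₁ g φ, ρ₁ g φ'⟫ = ⟪φ, φ'⟫)
    (hinner₂ : ∀ (g : G₂) (φ φ' : V₂), ⟪ρ₂ g φ, ρ₂ g φ'⟫ = ⟪φ, φ'⟫)
    (hf₁inv : ∀ (g : G₁) (φ : V₁), f₁ (ρ₁ g φ) = f₁ φ)
    (hf₂inv : ∀ (g : G₂) (φ : V₂), f₂ (ρ₂ g φ) = f₂ φ)
    (hlam₁inv : ∀ (g : G₁) (A : Set V₁), MeasurableSet A → lam₁ (ρ₁ g '' A) = lam₁ A)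
    (hlam₂inv : ∀ (g : G₂) (A : Set V₂), MeasurableSet A → lam₂ (ρ₂ g '' A) = lam₂ A)
    (T : G₁ →* G₂)
    (IsGENEO : (V₁ → V₂) → Prop)
    (hIsGENEO : ∀ F : V₁ → V₂, IsGENEO F ↔
      (ContinuousOn F Φ₁ ∧ Set.MapsTo F Φ₁ Φ₂ ∧
        (∀ (g : G₁), ∀ φ ∈ Φ₁, F (ρ₁ g φ) = ρ₂ (T g) (F φ)) ∧
        ∀ φ ∈ Φ₁, ∀ φ' ∈ Φ₁, ‖F φ - F φ'‖ ≤ ‖φ - φ'‖))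
    (nL2 : (V₁ → V₂) → ℝ)
    (hnL2 : ∀ F : V₁ → V₂,
      nL2 F = Real.sqrt (∫ φ in Φ₁, ‖F φ‖ ^ 2 * f₁ φ ∂lam₁))
    :
    ∀ ε > (0 : ℝ), ∃ 𝓕 : Set (V₁ → V₂), 𝓕.Finite ∧
      (∀ F' ∈ 𝓕, IsGENEO F') ∧
      ∀ F : V₁ → V₂, IsGENEO F → ∃ F' ∈ 𝓕, nL2 (F - F') < ε := by
  classical
  intro ε hε
  set δ : ℝ := ε / 5 with hδdef
  have hδ : 0 < δ := by positivity
  have hΦ₁meas : MeasurableSet Φ₁ := hΦ₁c.isClosed.measurableSet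
  obtain ⟨s₁, hs₁sub, hs₁fin, hs₁cov⟩ :=
    hΦ₁c.elim_finite_subcover_image (b := Φ₁) (c := fun a => Metric.ball a δ)
      (fun a _ => Metric.isOpen_ball)
      (fun φ hφ => Set.mem_biUnion hφ (Metric.mem_ball_self hδ))
  obtain ⟨s₂, hs₂sub, hs₂fin, hs₂cov⟩ :=
    hΦ₂c.elim_finite_subcover_image (b := Φ₂) (c := fun a => Metric.ball a δ)
      (fun a _ => Metric.isOpen_ball)
      (fun φ hφ => Set.mem_biUnion hφ (Metric.mem_ball_self hδ))
  haveI := hs₁fin.to_subtype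
  haveI := hs₂fin.to_subtype
  set Good : (↥s₁ → ↥s₂) → Prop :=
    fun h => ∃ F : V₁ → V₂, IsGENEO F ∧ ∀ a : ↥s₁, ‖F (a : V₁) - ((h a : V₂))‖ < δ
    with hGooddef
  refine ⟨(fun x : {h : ↥s₁ → ↥s₂ // Good h} => x.2.choose) '' Set.univ,
    Set.finite_univ.image _, ?_, ?_⟩
  · rintro F' ⟨x, -, rfl⟩
    exact x.2.choose_spec.1
  · intro F hF
    obtain ⟨hFc, hFm, hFe, hFne⟩ := (hIsGENEO F).mp hF
    have hchoice : ∀ a : ↥s₁, ∃ b : ↥s₂, ‖F (a : V₁) - (b : V₂)‖ < δ := by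
      intro a
      have hFa : F (a : V₁) ∈ ⋃ b ∈ s₂, Metric.ball b δ := hs₂cov (hFm (hs₁sub a.2))
      obtain ⟨b, hb, hmem⟩ := Set.mem_iUnion₂.mp hFa
      exact ⟨⟨b, hb⟩, by simpa [dist_eq_norm] using hmem⟩
    choose h hh using hchoice
    have hGood : Good h := ⟨F, hF, hh⟩
    refine ⟨hGood.choose, ⟨⟨h, hGood⟩, Set.mem_univ _, rfl⟩, ?_⟩
    set F' := hGood.choose with hF'def
    obtain ⟨hF'geneo, hF'near⟩ := hGood.choose_spec
    obtain ⟨hF'c, hF'm, hF'e, hF'ne⟩ := (hIsGENEO F').mp hF'geneo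
    have key : ∀ φ ∈ Φ₁, ‖F φ - F' φ‖ ≤ 4 * δ := by
      intro φ hφ
      obtain ⟨a, ha, haball⟩ := Set.mem_iUnion₂.mp (hs₁cov hφ)
      have hφa : ‖φ - a‖ ≤ δ := by
        have := haball
        simp only [Metric.mem_ball, dist_eq_norm] at this
        linarith
      have h1 : ‖F φ - F a‖ ≤ δ := le_trans (hFne φ hφ a (hs₁sub ha)) hφa
      have h2 : ‖F a - (h ⟨a, ha⟩ : V₂)‖ < δ := hh ⟨a, ha⟩
      have h3 : ‖F' a - (h ⟨a, ha⟩ : V₂)‖ < δ := hF'near ⟨a, ha⟩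
      have h4 : ‖F' a - F' φ‖ ≤ δ := by
        have := hF'ne a (hs₁sub ha) φ hφ
        have hrev : ‖a - φ‖ = ‖φ - a‖ := norm_sub_rev _ _
        linarith
      have t1 : ‖F φ - F' φ‖ ≤ ‖F φ - F a‖ + ‖F a - F' a‖ + ‖F' a - F' φ‖ := by
        have := dist_triangle4 (F φ) (F a) (F' a) (F' φ)
        simpa [dist_eq_norm] using this
      have t2 : ‖F a - F' a‖ ≤ ‖F a - (h ⟨a, ha⟩ : V₂)‖ + ‖F' a - (h ⟨a, ha⟩ : V₂)‖ := by
        have := dist_triangle (F a) (h ⟨a, ha⟩ : V₂) (F' a)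
        simp only [dist_eq_norm] at this
        have hrev : ‖(h ⟨a, ha⟩ : V₂) - F' a‖ = ‖F' a - (h ⟨a, ha⟩ : V₂)‖ :=
          norm_sub_rev _ _
        linarith
      linarith
    rw [hnL2]
    have hmono : ∫ φ in Φ₁, ‖(F - F') φ‖ ^ 2 * f₁ φ ∂lam₁
        ≤ ∫ φ in Φ₁, (4 * δ) ^ 2 * f₁ φ ∂lam₁ := by
      apply integral_mono_of_nonneg
      · exact Filter.Eventually.of_forall fun φ => mul_nonneg (by positivity) (hf₁0 φ)
      · exact ((hf₁int.const_mul ((4 * δ) ^ 2)).restrict)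
      · filter_upwards [self_mem_ae_restrict hΦ₁meas] with φ hφ
        have hk := key φ hφ
        have hn : ‖(F - F') φ‖ = ‖F φ - F' φ‖ := by simp [Pi.sub_apply]
        have h2 : ‖(F - F') φ‖ ^ 2 ≤ (4 * δ) ^ 2 := by
          rw [hn]
          nlinarith [norm_nonneg (F φ - F' φ)]
        exact mul_le_mul_of_nonneg_right h2 (hf₁0 φ)
    have heq : ∫ φ in Φ₁, (4 * δ) ^ 2 * f₁ φ ∂lam₁
        = (4 * δ) ^ 2 * ∫ φ in Φ₁, f₁ φ ∂lam₁ := integral_const_mul _ _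
    have hle1 : ∫ φ in Φ₁, f₁ φ ∂lam₁ ≤ 1 := by
      rw [← hf₁1]
      exact setIntegral_le_integral hf₁int (Filter.Eventually.of_forall hf₁0)
    have htot : ∫ φ in Φ₁, ‖(F - F') φ‖ ^ 2 * f₁ φ ∂lam₁ ≤ (4 * δ) ^ 2 := by
      calc ∫ φ in Φ₁, ‖(F - F') φ‖ ^ 2 * f₁ φ ∂lam₁
          ≤ (4 * δ) ^ 2 * ∫ φ in Φ₁, f₁ φ ∂lam₁ := heq ▸ hmono
        _ ≤ (4 * δ) ^ 2 * 1 := by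
            apply mul_le_mul_of_nonneg_left hle1 (by positivity)
        _ = (4 * δ) ^ 2 := mul_one _
    calc Real.sqrt (∫ φ in Φ₁, ‖(F - F') φ‖ ^ 2 * f₁ φ ∂lam₁)
        ≤ Real.sqrt ((4 * δ) ^ 2) := Real.sqrt_le_sqrt htot
      _ = 4 * δ := by
          rw [Real.sqrt_sq (by positivity)]
      _ < ε := by rw [hδdef]; linarith
end
end
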